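/- arXiv:1901.02071 — 3 statements merged into one kernel-verified Lean document; each statement's English description precedes it below -/
import Mathlib

section
/- Let F_2 = FreeGroup (Fin 2) with free generators x₀, x₁ and let c = x₀x₁x₀⁻¹x₁⁻¹. For every automorphism Φ of F_2, the element Φ(c) is conjugate in F_2 to c or to c⁻¹. -/
/-- The commutator `x₀x₁x₀⁻¹x₁⁻¹` of the free generators of `F_2`. -/
def commF2 : FreeGroup (Fin 2) :=
  FreeGroup.of (0 : Fin 2) * FreeGroup.of (1 : Fin 2) *
    (FreeGroup.of (0 : Fin 2))⁻¹ * (FreeGroup.of (1 : Fin 2))⁻¹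

namespace NielsenAux
open FreeGroup List
set_option linter.unusedSectionVars false
set_option linter.unreachableTactic false
set_option linter.unusedTactic false
set_option maxHeartbeats 1000000

section Words
variable {α : Type*} [DecidableEq α]




/-- A word is reduced: no adjacent cancelling pair. -/
def Reduced (L : List (α × Bool)) : Prop :=
  List.Chain' (fun a b => ¬(a.1 = b.1 ∧ a.2 = !b.2)) L

theorem reduced_reduce (L : List (α × Bool)) : Reduced (reduce L) := by
  induction L with
  | nil => exact List.isChain_nil
  | cons x L ih =>
    rw [reduce.cons]
    rcases h : reduce L with - | ⟨y, t⟩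
    · exact List.isChain_singleton x
    · rw [h] at ih
      by_cases hc : x.1 = y.1 ∧ x.2 = !y.2
      · simp only [if_pos hc]
        exact ih.tail
      · simp only [if_neg hc]
        exact List.isChain_cons_cons.2 ⟨hc, ih⟩

theorem Reduced.reduce_eq {L : List (α × Bool)} (h : Reduced L) : reduce L = L := by
  induction L with
  | nil => rfl
  | cons x L ih =>
    have hL : Reduced L := h.tail
    rw [reduce.cons, ih hL]
    rcases hL' : L with - | ⟨y, t⟩
    · rfl
    · have hxy : ¬(x.1 = y.1 ∧ x.2 = !y.2) := by
        subst hL'; exact List.isChain_cons_cons.1 h |>.1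
      simp only [if_neg hxy]

theorem reduced_iff {L : List (α × Bool)} : Reduced L ↔ reduce L = L :=
  ⟨Reduced.reduce_eq, fun h => h ▸ reduced_reduce L⟩

theorem reduced_toWord (x : FreeGroup α) : Reduced (toWord x) :=
  reduced_iff.2 (reduce_toWord x)

theorem Reduced.append_left {L₁ L₂ : List (α × Bool)} (h : Reduced (L₁ ++ L₂)) : Reduced L₁ :=
  (List.isChain_append.1 h).1

theorem Reduced.append_right {L₁ L₂ : List (α × Bool)} (h : Reduced (L₁ ++ L₂)) : Reduced L₂ :=
  (List.isChain_append.1 h).2.1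

theorem Reduced.infix {L L' : List (α × Bool)} (h : Reduced L) (h' : L' <:+: L) : Reduced L' := by
  obtain ⟨s, t, rfl⟩ := h'
  rw [List.append_assoc] at h
  exact (h.append_right).append_left

theorem Reduced.toWord_mk {L : List (α × Bool)} (h : Reduced L) : (mk L).toWord = L := by
  rw [FreeGroup.toWord_mk, h.reduce_eq]

theorem Reduced.norm_mk {L : List (α × Bool)} (h : Reduced L) : norm (mk L) = L.length := by
  rw [FreeGroup.norm, h.toWord_mk]

theorem Reduced.invRev {L : List (α × Bool)} (h : Reduced L) : Reduced (invRev L) := by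
  rw [reduced_iff, reduce_invRev, h.reduce_eq]

theorem invRev_append (L₁ L₂ : List (α × Bool)) :
    invRev (L₁ ++ L₂) = invRev L₂ ++ invRev L₁ := by
  simp [FreeGroup.invRev]

theorem invRev_cons (x : α × Bool) (L : List (α × Bool)) :
    invRev (x :: L) = invRev L ++ [(x.1, !x.2)] := by
  simp [FreeGroup.invRev]

theorem length_invRev (L : List (α × Bool)) : (invRev L).length = L.length :=
  invRev_length

/-- A nonempty word followed by its formal inverse is never reduced. -/
theorem not_reduced_append_invRev {L : List (α × Bool)} (hL : L ≠ []) :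
    ¬ Reduced (L ++ invRev L) := by
  intro h
  obtain ⟨L', x, rfl⟩ := List.eq_nil_or_concat L |>.resolve_left hL
  rw [List.concat_eq_append] at h
  have hir : invRev (L' ++ [x]) = (x.1, !x.2) :: invRev L' := by
    simp [FreeGroup.invRev]
  rw [hir] at h
  have h2 : Reduced ([x, (x.1, !x.2)]) := h.infix ⟨L', invRev L', by simp⟩
  have := (List.isChain_cons_cons.1 h2).1
  simp at this

theorem mk_step_cancel (A B : List (α × Bool)) (x : α × Bool) :
    mk (A ++ x :: (x.1, !x.2) :: B) = mk (A ++ B) := by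
  have : Red.Step (A ++ x :: (x.1, !x.2) :: B) (A ++ B) := Red.Step.not
  rw [← quot_mk_eq_mk, ← quot_mk_eq_mk]
  exact Quot.sound this

/-- Cancellation decomposition for the product of two reduced words. -/
theorem mul_decomp : ∀ (X Y : List (α × Bool)), Reduced X → Reduced Y →
    ∃ P R Q : List (α × Bool), X = P ++ invRev R ∧ Y = R ++ Q ∧ Reduced (P ++ Q) ∧
      mk X * mk Y = mk (P ++ Q) := by
  intro X
  induction X using List.reverseRecOn with
  | nil =>
    intro Y _ hY
    refine ⟨[], [], Y, by simp [invRev_empty], by simp, hY, ?_⟩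
    rw [mul_mk]
  | append_singleton X' ℓ ih =>
    intro Y hX hY
    rcases Y with - | ⟨y, Y'⟩
    · refine ⟨X' ++ [ℓ], [], [], by simp [invRev_empty], rfl, by simpa using hX, ?_⟩
      rw [mul_mk]
    · by_cases hc : y = (ℓ.1, !ℓ.2)
      · subst hc
        have hX' : Reduced X' := hX.append_left
        have hY' : Reduced Y' := hY.tail
        obtain ⟨P, R, Q, h1, h2, h3, h4⟩ := ih Y' hX' hY'
        refine ⟨P, (ℓ.1, !ℓ.2) :: R, Q, ?_, by rw [h2, List.cons_append], h3, ?_⟩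
        · rw [invRev_cons, h1]
          simp [Bool.not_not, List.append_assoc]
        · have e1 : mk (X' ++ [ℓ]) * mk ((ℓ.1, !ℓ.2) :: Y') = mk (X' ++ Y') := by
            rw [mul_mk]
            have he : X' ++ [ℓ] ++ (ℓ.1, !ℓ.2) :: Y' = X' ++ ℓ :: (ℓ.1, !ℓ.2) :: Y' := by simp
            have hℓ : (ℓ.1, !ℓ.2) = ((ℓ.1, ℓ.2).1, !(ℓ.1,ℓ.2).2) := rfl
            rw [he]
            have := mk_step_cancel X' Y' ℓ
            simpa using this
          rw [e1, ← h4, mul_mk]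
      · refine ⟨X' ++ [ℓ], [], y :: Y', by simp [invRev_empty], rfl, ?_, ?_⟩
        · rw [List.append_assoc]
          apply List.isChain_append.2
          refine ⟨hX.append_left, ?_, ?_⟩
          · refine List.isChain_append.2 ⟨List.isChain_singleton ℓ, hY, ?_⟩
            intro p hp q hq
            simp only [List.getLast?_singleton, Option.mem_some_iff] at hp
            subst hp
            have hq' : q = y := by
              cases Y' <;> simp_all
            subst hq'
            intro ⟨e1, e2⟩
            exact hc (Prod.ext e1.symm (by simp [e2]))
          · intro p hp q hq
            have h2 := List.isChain_append.1 hX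
            refine h2.2.2 p hp q ?_
            simpa using hq
        · rw [mul_mk, List.append_assoc]
theorem norm_mul_cancel_le (w z : FreeGroup α) (A B S : List (α × Bool))
    (hw : toWord w = A ++ invRev S) (hz : toWord z = S ++ B) :
    norm (w * z) ≤ A.length + B.length := by
  have ew : w = mk A * (mk S)⁻¹ := by
    rw [inv_mk, mul_mk, ← hw, mk_toWord]
  have ez : z = mk S * mk B := by rw [mul_mk, ← hz, mk_toWord]
  have : w * z = mk A * mk B := by
    rw [ew, ez]
    group
  rw [this]
  calc norm (mk A * mk B) ≤ norm (mk A) + norm (mk B) := norm_mul_le _ _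
    _ ≤ A.length + B.length := Nat.add_le_add norm_mk_le norm_mk_le

theorem canc_bound {w z : FreeGroup α} {A B S : List (α × Bool)}
    (h1 : toWord w = A ++ invRev S) (h2 : toWord z = S ++ B)
    (hw : norm w ≤ norm (w * z)) (hz : norm z ≤ norm (w * z)) :
    2 * S.length ≤ norm w ∧ 2 * S.length ≤ norm z := by
  have hle := norm_mul_cancel_le w z A B S h1 h2
  have e1 : norm w = A.length + S.length := by
    rw [FreeGroup.norm, h1, List.length_append, invRev_length]
  have e2 : norm z = S.length + B.length := by
    rw [FreeGroup.norm, h2, List.length_append]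
  omega

theorem no_self_invRev_aux : ∀ (n : ℕ) (T : List (α × Bool)), T.length = n → T ≠ [] → Reduced T → T = invRev T → False := by
  intro n
  induction n using Nat.strong_induction_on with
  | _ n ih =>
  intro T hn hne hred heq
  rcases T with - | ⟨x, T'⟩
  · exact hne rfl
  rcases List.eq_nil_or_concat T' with rfl | ⟨M, z, rfl⟩
  · rw [invRev_cons] at heq
    simp [FreeGroup.invRev, Prod.ext_iff] at heq
  · rw [List.concat_eq_append] at *
    rw [invRev_cons, invRev_append] at heq
    have hz : invRev [z] = [(z.1, !z.2)] := by simp [FreeGroup.invRev]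
    rw [hz] at heq
    -- heq : x :: (M ++ [z]) = ((z.1,!z.2) :: invRev M) ++ [(x.1,!x.2)]
    have hx : x = (z.1, !z.2) := by
      have := congrArg (fun l => l.head?) heq
      simpa using this
    have hM : M = invRev M := by
      have hlen : M.length = (invRev M).length := (invRev_length).symm
      have : x :: (M ++ [z]) = (z.1,!z.2) :: (invRev M ++ [(x.1,!x.2)]) := by
        simpa using heq
      have htail : M ++ [z] = invRev M ++ [(x.1,!x.2)] := by
        injection this
      exact List.append_inj_left htail hlen
    rcases M with - | ⟨m, M'⟩
    · -- T = [x, z] with x = (z.1, !z.2): not reduced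
      have : ¬ (x.1 = z.1 ∧ x.2 = !z.2) := (List.isChain_cons_cons.1 hred).1
      exact this (by rw [hx]; exact ⟨rfl, by simp⟩)
    · refine ih (m :: M').length ?_ (m :: M') rfl (by simp) ?_ hM
      · subst hn; simp
      · exact hred.infix ⟨[x], [z], by simp⟩

theorem no_self_invRev' (T : List (α × Bool)) (hne : T ≠ []) (hred : Reduced T)
    (heq : T = invRev T) : False :=
  no_self_invRev_aux T.length T rfl hne hred heq

theorem square_canc {w : FreeGroup α} {A B S : List (α × Bool)}
    (h1 : toWord w = A ++ invRev S) (h2 : toWord w = S ++ B) :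
    2 * S.length ≤ norm w := by
  by_contra hlt
  push_neg at hlt
  have e1 : norm w = A.length + S.length := by
    rw [FreeGroup.norm, h1, List.length_append, invRev_length]
  have e2 : norm w = S.length + B.length := by
    rw [FreeGroup.norm, h2, List.length_append]
  have hAS : A <+: S := by
    refine List.prefix_of_prefix_length_le ⟨invRev S, h1.symm⟩ ⟨B, h2.symm⟩ ?_
    omega
  obtain ⟨T, rfl⟩ := hAS
  have hTne : T ≠ [] := by
    intro h
    subst h
    simp only [List.append_nil] at e1 hlt
    omega
  have heq2 : A ++ (invRev T ++ invRev A) = A ++ (T ++ B) := by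
    have := h1.symm.trans h2
    rw [invRev_append] at this
    simpa [List.append_assoc] using this
  have heq3 : invRev T ++ invRev A = T ++ B := List.append_cancel_left heq2
  have hTT : invRev T = T := List.append_inj_left heq3 (invRev_length)
  exact no_self_invRev' T hTne ((reduced_toWord w).infix ⟨A, B, by rw [h2]⟩) hTT.symm

theorem reduce_eq_self_of_length {L : List (α × Bool)} (h : (reduce L).length = L.length) :
    reduce L = L :=
  (Red.sublist (reduce.red)).eq_of_length h

theorem no_self_invRev (T : List (α × Bool)) (hne : T ≠ []) (hred : Reduced T)
    (heq : T = invRev T) : False :=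
  no_self_invRev_aux T.length T rfl hne hred heq


end Words

section Lists
variable {G : Type*} [Group G] [DecidableEq G]

def push (a : G) : List G → List G
  | [] => [a]
  | b :: l => if b = a⁻¹ then l else a :: b :: l

theorem push_prod (a : G) (l : List G) : (push a l).prod = a * l.prod := by
  rcases l with - | ⟨b, l⟩
  · simp [push]
  · by_cases h : b = a⁻¹
    · simp [push, h]
    · simp [push, h]

theorem push_chain {a : G} {l : List G} (h : List.Chain' (fun x y => y ≠ x⁻¹) l) :
    List.Chain' (fun x y => y ≠ x⁻¹) (push a l) := by
  rcases l with - | ⟨b, l⟩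
  · simp [push]; exact List.isChain_singleton a
  · by_cases hb : b = a⁻¹
    · simp only [push, if_pos hb]
      exact h.tail
    · simp only [push, if_neg hb]
      exact List.isChain_cons_cons.2 ⟨hb, h⟩

theorem push_mem {a x : G} {l : List G} (h : x ∈ push a l) : x = a ∨ x ∈ l := by
  rcases l with - | ⟨b, l⟩
  · simp [push] at h; exact Or.inl h
  · by_cases hb : b = a⁻¹
    · simp only [push, if_pos hb] at h
      exact Or.inr (List.mem_cons_of_mem _ h)
    · simp only [push, if_neg hb] at h
      rw [List.mem_cons] at h
      rcases h with rfl | h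
      · exact Or.inl rfl
      · exact Or.inr h

def normList : List G → List G := List.foldr push []

theorem normList_prod (l : List G) : (normList l).prod = l.prod := by
  induction l with
  | nil => rfl
  | cons a l ih =>
    show (push a (normList l)).prod = _
    rw [push_prod, ih, List.prod_cons]
theorem normList_chain (l : List G) : List.Chain' (fun x y => y ≠ x⁻¹) (normList l) := by
  induction l with
  | nil => simp [normList]; exact List.isChain_nil
  | cons a l ih => exact push_chain ih

theorem normList_mem {l : List G} {x : G} (h : x ∈ normList l) : x ∈ l := by
  induction l with
  | nil => simp [normList] at h
  | cons a l ih =>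
    rcases push_mem h with rfl | h
    · exact List.mem_cons_self
    · exact List.mem_cons_of_mem _ (ih h)

theorem exists_word {u v g : G} (hg : g ∈ Subgroup.closure ({u, v} : Set G)) :
    ∃ ws : List G, (∀ w ∈ ws, w ∈ ({u, u⁻¹, v, v⁻¹} : Set G)) ∧
      List.Chain' (fun x y => y ≠ x⁻¹) ws ∧ ws.prod = g := by
  have : ∃ ws : List G, (∀ w ∈ ws, w ∈ ({u, u⁻¹, v, v⁻¹} : Set G)) ∧ ws.prod = g := by
    induction hg using Subgroup.closure_induction with
    | mem x hx =>
      rcases hx with rfl | rfl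
      · exact ⟨[x], by simp, by simp⟩
      · exact ⟨[x], by simp, by simp⟩
    | one => exact ⟨[], by simp, by simp⟩
    | mul x y _ _ ihx ihy =>
      obtain ⟨ws1, h1, e1⟩ := ihx
      obtain ⟨ws2, h2, e2⟩ := ihy
      refine ⟨ws1 ++ ws2, ?_, by rw [List.prod_append, e1, e2]⟩
      intro w hw
      rcases List.mem_append.1 hw with h | h
      · exact h1 w h
      · exact h2 w h
    | inv x _ ihx =>
      obtain ⟨ws, h1, e1⟩ := ihx
      refine ⟨(ws.map fun a => a⁻¹).reverse, ?_, ?_⟩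
      · intro w hw
        simp only [List.mem_reverse, List.mem_map] at hw
        obtain ⟨a, ha, rfl⟩ := hw
        rcases h1 a ha with rfl | rfl | rfl | rfl
        · right; left; rfl
        · left; simp
        · right; right; right; rfl
        · right; right; left; simp
      · rw [← e1, List.prod_inv_reverse]
  obtain ⟨ws, h1, e1⟩ := this
  exact ⟨normList ws, fun w hw => h1 w (normList_mem hw), normList_chain ws,
    by rw [normList_prod, e1]⟩

end Lists

section Moves
variable {G : Type*} [Group G]


inductive Move : G × G → G × G → Prop
  | invL (u v : G) : Move (u, v) (u⁻¹, v)
  | invR (u v : G) : Move (u, v) (u, v⁻¹)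
  | swap (u v : G) : Move (u, v) (v, u)
  | mulR (u v : G) : Move (u, v) (u * v, v)

def Reach : G × G → G × G → Prop := Relation.ReflTransGen Move

theorem Reach.rfl {p : G × G} : Reach p p := Relation.ReflTransGen.refl

theorem Reach.step {p q r : G × G} (h : Reach p q) (h2 : Move q r) : Reach p r :=
  Relation.ReflTransGen.tail h h2

theorem Reach.trans {p q r : G × G} (h : Reach p q) (h2 : Reach q r) : Reach p r :=
  Relation.ReflTransGen.trans h h2

theorem move_reach_symm {p q : G × G} (h : Move p q) : Reach q p := by
  cases h with
  | invL u v =>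
    have := Reach.step (Reach.rfl (p := (u⁻¹, v))) (Move.invL u⁻¹ v)
    simpa using this
  | invR u v =>
    have := Reach.step (Reach.rfl (p := (u, v⁻¹))) (Move.invR u v⁻¹)
    simpa using this
  | swap u v => exact Reach.step Reach.rfl (Move.swap v u)
  | mulR u v =>
    have h1 : Reach (u * v, v) (u * v, v⁻¹) := Reach.step Reach.rfl (Move.invR _ _)
    have h2 : Reach (u * v, v) (u * v * v⁻¹, v⁻¹) := h1.step (Move.mulR _ _)
    have h3 : Reach (u * v, v) (u * v * v⁻¹, v⁻¹⁻¹) := h2.step (Move.invR _ _)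
    simpa using h3

theorem Reach.symm {p q : G × G} (h : Reach p q) : Reach q p := by
  induction h with
  | refl => exact Reach.rfl
  | tail h1 h2 ih => exact (move_reach_symm h2).trans ih

theorem closure_pair_eq {a b a' b' : G}
    (h1 : a' ∈ Subgroup.closure ({a, b} : Set G)) (h2 : b' ∈ Subgroup.closure ({a, b} : Set G))
    (h3 : a ∈ Subgroup.closure ({a', b'} : Set G)) (h4 : b ∈ Subgroup.closure ({a', b'} : Set G)) :
    Subgroup.closure ({a, b} : Set G) = Subgroup.closure ({a', b'} : Set G) := by
  apply _root_.le_antisymm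
  · rw [Subgroup.closure_le]
    rintro x (rfl | rfl)
    · exact h3
    · exact h4
  · rw [Subgroup.closure_le]
    rintro x (rfl | rfl)
    · exact h1
    · exact h2

theorem mem_pair_closure_left (a b : G) : a ∈ Subgroup.closure ({a, b} : Set G) :=
  Subgroup.subset_closure (by simp)

theorem mem_pair_closure_right (a b : G) : b ∈ Subgroup.closure ({a, b} : Set G) :=
  Subgroup.subset_closure (by simp)

theorem move_closure {p q : G × G} (h : Move p q) :
    Subgroup.closure ({p.1, p.2} : Set G) = Subgroup.closure {q.1, q.2} := by
  cases h with
  | invL u v =>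
    refine closure_pair_eq ((Subgroup.inv_mem _ (mem_pair_closure_left u v))) (mem_pair_closure_right u v)
      ?_ (mem_pair_closure_right u⁻¹ v)
    simpa using Subgroup.inv_mem _ (mem_pair_closure_left u⁻¹ v)
  | invR u v =>
    refine closure_pair_eq (mem_pair_closure_left u v) (Subgroup.inv_mem _ (mem_pair_closure_right u v))
      (mem_pair_closure_left u v⁻¹) ?_
    simpa using Subgroup.inv_mem _ (mem_pair_closure_right u v⁻¹)
  | swap u v => rw [Set.pair_comm]
  | mulR u v =>
    refine closure_pair_eq (Subgroup.mul_mem _ (mem_pair_closure_left u v) (mem_pair_closure_right u v))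
      (mem_pair_closure_right u v) ?_ (mem_pair_closure_right (u * v) v)
    simpa using Subgroup.mul_mem _ (mem_pair_closure_left (u * v) v) (Subgroup.inv_mem _ (mem_pair_closure_right (u * v) v))

theorem reach_closure {p q : G × G} (h : Reach p q) :
    Subgroup.closure ({p.1, p.2} : Set G) = Subgroup.closure {q.1, q.2} := by
  induction h with
  | refl => rfl
  | tail h1 h2 ih => exact ih.trans (move_closure h2)

/-- The commutator of a pair. -/
def K (p : G × G) : G := p.1 * p.2 * p.1⁻¹ * p.2⁻¹

/-- The conjugacy property we transport along Nielsen moves. -/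
def P (c : G) (p : G × G) : Prop := IsConj (K p) c ∨ IsConj (K p) c⁻¹

theorem isConj_inv {a b : G} (h : IsConj a b) : IsConj a⁻¹ b⁻¹ := by
  obtain ⟨g, hg⟩ := isConj_iff.1 h
  exact isConj_iff.2 ⟨g, by rw [← hg]; group⟩

theorem isConj_inv_left {a c : G} : IsConj a⁻¹ c ↔ IsConj a c⁻¹ := by
  constructor
  · intro h
    simpa using isConj_inv h
  · intro h
    simpa using isConj_inv h

theorem P_or_iff_of_isConj {c a b : G} (hab : IsConj a b) :
    (IsConj a c ∨ IsConj a c⁻¹) ↔ (IsConj b c ∨ IsConj b c⁻¹) := by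
  constructor
  · rintro (h1 | h1)
    exacts [Or.inl (hab.symm.trans h1), Or.inr (hab.symm.trans h1)]
  · rintro (h1 | h1)
    exacts [Or.inl (hab.trans h1), Or.inr (hab.trans h1)]

theorem P_or_inv_iff {c a : G} :
    (IsConj a⁻¹ c ∨ IsConj a⁻¹ c⁻¹) ↔ (IsConj a c ∨ IsConj a c⁻¹) := by
  rw [isConj_inv_left, isConj_inv_left, inv_inv]
  exact or_comm

theorem P_of_isConj {c : G} {p q : G × G}
    (h : IsConj (K q) (K p) ∨ IsConj (K q) (K p)⁻¹) : P c p ↔ P c q := by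
  unfold P
  rcases h with h | h
  · exact (P_or_iff_of_isConj h).symm
  · have h2 : IsConj (K q)⁻¹ (K p) := by simpa using isConj_inv h
    rw [← P_or_inv_iff (a := K q)]
    exact (P_or_iff_of_isConj h2.symm)

theorem move_P {c : G} {p q : G × G} (h : Move p q) : P c p ↔ P c q := by
  apply P_of_isConj
  cases h with
  | invL u v =>
    right
    refine isConj_iff.2 ⟨u, ?_⟩
    show u * (K (u⁻¹, v)) * u⁻¹ = (K (u, v))⁻¹
    simp only [K]
    group
  | invR u v =>
    right
    refine isConj_iff.2 ⟨v, ?_⟩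
    show v * (K (u, v⁻¹)) * v⁻¹ = (K (u, v))⁻¹
    simp only [K]
    group
  | swap u v =>
    right
    refine isConj_iff.2 ⟨1, ?_⟩
    show 1 * (K (v, u)) * 1⁻¹ = (K (u, v))⁻¹
    simp only [K]
    group
  | mulR u v =>
    left
    refine isConj_iff.2 ⟨1, ?_⟩
    show 1 * (K (u * v, v)) * 1⁻¹ = K (u, v)
    simp only [K]
    group

theorem reach_P {c : G} {p q : G × G} (h : Reach p q) : P c p ↔ P c q := by
  induction h with
  | refl => rfl
  | tail h1 h2 ih => exact ih.trans (move_P h2)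


end Moves

section Min
variable {α : Type*} [DecidableEq α]

open FreeGroup

/-- Total-parity homomorphism. -/
def phi (α : Type*) : FreeGroup α →* Multiplicative (ZMod 2) :=
  FreeGroup.lift fun _ => Multiplicative.ofAdd 1

theorem phi_apply (x : FreeGroup α) :
    phi α x = Multiplicative.ofAdd ((norm x : ZMod 2)) := by
  conv_lhs => rw [← mk_toWord (x := x)]
  rw [FreeGroup.norm]
  rw [phi, FreeGroup.lift_mk]
  generalize (toWord x) = L
  induction L with
  | nil => simp
  | cons p L ih =>
    rw [List.map_cons, List.prod_cons, ih]
    have h1 : (Multiplicative.ofAdd (1 : ZMod 2))⁻¹ = Multiplicative.ofAdd 1 := by decide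
    have h2 : (cond p.2 (Multiplicative.ofAdd (1 : ZMod 2)) (Multiplicative.ofAdd 1)⁻¹)
        = Multiplicative.ofAdd 1 := by cases p.2 <;> simp [h1]
    rw [h2]
    rw [← ofAdd_add]
    congr 1
    rw [List.length_cons, Nat.cast_succ, add_comm]

theorem not_both_even {u v : FreeGroup α} (a : α)
    (hc : Subgroup.closure ({u, v} : Set (FreeGroup α)) = ⊤)
    (hu : norm u % 2 = 0) (hv : norm v % 2 = 0) : False := by
  have hker : ∀ w ∈ ({u, v} : Set (FreeGroup α)), w ∈ (phi α).ker := by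
    rintro w (rfl | rfl) <;>
    · rw [MonoidHom.mem_ker, phi_apply]
      obtain ⟨k, hk⟩ : ∃ k, norm w = 2 * k := ⟨norm w / 2, by omega⟩
      rw [hk, Nat.cast_mul]
      have h2 : ((2:ℕ) : ZMod 2) = 0 := by decide
      rw [h2, zero_mul]
      rfl
  have hle : Subgroup.closure ({u, v} : Set (FreeGroup α)) ≤ (phi α).ker :=
    (Subgroup.closure_le _).2 hker
  rw [hc] at hle
  have := hle (Subgroup.mem_top (FreeGroup.of a))
  rw [MonoidHom.mem_ker, phi_apply, norm_of] at this
  rw [Nat.cast_one] at this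
  exact absurd this (by decide)

/-- Sum of norms of a pair. -/
def sum2 (p : FreeGroup α × FreeGroup α) : ℕ := norm p.1 + norm p.2

/-- Minimality of a pair in its Nielsen equivalence class. -/
def MinPair (p : FreeGroup α × FreeGroup α) : Prop :=
  ∀ q, Reach p q → sum2 p ≤ sum2 q

theorem exists_minPair (p₀ : FreeGroup α × FreeGroup α) :
    ∃ p, Reach p₀ p ∧ MinPair p := by
  classical
  set S : Set ℕ := {n | ∃ p, Reach p₀ p ∧ sum2 p = n} with hS
  have hne : S.Nonempty := ⟨sum2 p₀, p₀, Reach.rfl, rfl⟩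
  obtain ⟨p, hp, hps⟩ := Nat.sInf_mem hne
  refine ⟨p, hp, fun q hq => ?_⟩
  rw [hps]
  exact Nat.sInf_le ⟨q, hp.trans hq, rfl⟩

theorem MinPair.of_reach {p q : FreeGroup α × FreeGroup α} (h : MinPair p) (hr : Reach p q)
    (he : sum2 q = sum2 p) : MinPair q := fun r hrr => he ▸ h r (hr.trans hrr)

theorem MinPair.mul_norm_ge {u v : FreeGroup α} (h : MinPair (u, v)) :
    norm u ≤ norm (u * v) ∧ norm v ≤ norm (u * v) := by
  constructor
  · have := h (u * v, v) (Reach.rfl.step (Move.mulR u v))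
    simp only [sum2] at this
    omega
  · have hr : Reach (u, v) (v⁻¹ * u⁻¹, u⁻¹) :=
      ((((Reach.rfl.step (Move.swap u v)).step (Move.invL v u)).step
        (Move.invR v⁻¹ u)).step (Move.mulR v⁻¹ u⁻¹))
    have := h _ hr
    simp only [sum2, ← mul_inv_rev, norm_inv_eq] at this
    omega

theorem MinPair.reach_same {u v : FreeGroup α} (h : MinPair (u, v))
    {w z : FreeGroup α} (hr : Reach (u, v) (w, z)) (he : norm w + norm z = norm u + norm v) :
    MinPair (w, z) := h.of_reach hr he

/-- N1 for cross pairs of a minimal pair. -/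
theorem MinPair.N1norm {u v : FreeGroup α} (h : MinPair (u, v)) :
    ∀ w z : FreeGroup α, w ∈ ({u, u⁻¹, v, v⁻¹} : Set (FreeGroup α)) →
      z ∈ ({u, u⁻¹, v, v⁻¹} : Set (FreeGroup α)) → z ≠ w⁻¹ → z ≠ w →
      norm w ≤ norm (w * z) ∧ norm z ≤ norm (w * z) := by
  have key : ∀ w z : FreeGroup α, Reach (u, v) (w, z) →
      norm w + norm z = norm u + norm v →
      norm w ≤ norm (w * z) ∧ norm z ≤ norm (w * z) := by
    intro w z hr he
    exact (h.reach_same hr he).mul_norm_ge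
  intro w z hw hz hzw1 hzw2
  have swap1 : Reach (u, v) (v, u) := Reach.rfl.step (Move.swap u v)
  have iL : Reach (u, v) (u⁻¹, v) := Reach.rfl.step (Move.invL u v)
  have iR : Reach (u, v) (u, v⁻¹) := Reach.rfl.step (Move.invR u v)
  have iLR : Reach (u, v) (u⁻¹, v⁻¹) := iL.step (Move.invR u⁻¹ v)
  rcases hw with rfl | rfl | rfl | rfl <;> rcases hz with rfl | rfl | rfl | rfl
  · exact absurd rfl hzw2
  · exact absurd rfl hzw1
  · exact key _ _ Reach.rfl (by simp)
  · exact key _ _ iR (by simp)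
  · exact absurd (inv_inv _).symm hzw1
  · exact absurd rfl hzw2
  · exact key _ _ iL (by simp)
  · exact key _ _ iLR (by simp)
  · exact key _ _ swap1 (by simp [add_comm])
  · exact key _ _ (swap1.step (Move.invR _ _)) (by simp [add_comm])
  · exact absurd rfl hzw2
  · exact absurd rfl hzw1
  · exact key _ _ (swap1.step (Move.invL _ _)) (by simp [add_comm])
  · exact key _ _ ((swap1.step (Move.invL _ _)).step (Move.invR _ _)) (by simp [add_comm])
  · exact absurd (inv_inv _).symm hzw1
  · exact absurd rfl hzw2

/-- The set of a pair and its inverses. -/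
def WS (u v : FreeGroup α) : Set (FreeGroup α) := {u, u⁻¹, v, v⁻¹}

/-- Cancellation between any two admissible factors is at most half of each. -/
def N1C (u v : FreeGroup α) : Prop :=
  ∀ w z, w ∈ WS u v → z ∈ WS u v → z ≠ w⁻¹ →
    ∀ A B S : List (α × Bool), toWord w = A ++ invRev S → toWord z = S ++ B →
      2 * S.length ≤ norm w ∧ 2 * S.length ≤ norm z

/-- No exact-half double cancellation configuration. -/
def N2C (u v : FreeGroup α) : Prop :=
  ∀ w₁ w₂ w₃, w₁ ∈ WS u v → w₂ ∈ WS u v → w₃ ∈ WS u v →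
    w₂ ≠ w₁⁻¹ → w₃ ≠ w₂⁻¹ →
    ∀ h t : List (α × Bool), toWord w₂ = h ++ t → h.length = t.length →
      (invRev h) <:+ toWord w₁ → (invRev t) <+: toWord w₃ → False

theorem prod_struct {u v : FreeGroup α} (hN0 : ∀ w ∈ WS u v, w ≠ 1)
    (hN1 : N1C u v) (hN2 : N2C u v) :
    ∀ ws : List (FreeGroup α), (∀ w ∈ ws, w ∈ WS u v) →
      List.Chain' (fun x y => y ≠ x⁻¹) ws → ∀ w₁ rest, ws = w₁ :: rest →
      ∃ t B : List (α × Bool), toWord ws.prod = t ++ B ∧ t ≠ [] ∧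
        (∃ h, toWord w₁ = t ++ h ∧ (2 * t.length = norm w₁ →
          ∃ w₂ rest', rest = w₂ :: rest' ∧ (invRev h) <+: toWord w₂)) ∧
        norm w₁ ≤ 2 * t.length ∧ (rest ≠ [] → B ≠ []) := by
  intro ws
  induction ws with
  | nil => intro _ _ w₁ rest h; exact absurd h (by simp)
  | cons w₀ ws' ih =>
    intro hmem hchain w₁ rest heq
    obtain ⟨rfl, rfl⟩ : w₀ = w₁ ∧ ws' = rest := by
      constructor <;> injection heq <;> assumption
    have hw₀W : w₀ ∈ WS u v := hmem w₀ (List.mem_cons_self)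
    have hw₀1 : w₀ ≠ 1 := hN0 w₀ hw₀W
    have hw₀n : norm w₀ ≠ 0 := fun h => hw₀1 (norm_eq_zero.1 h)
    rcases ws' with - | ⟨w₂, zws'⟩
    · refine ⟨toWord w₀, [], by simp, ?_, ⟨[], by simp, ?_⟩, by rw [FreeGroup.norm]; omega, by simp⟩
      · exact fun h => hw₀1 (toWord_eq_nil_iff.mp h)
      · intro habs
        exfalso
        rw [FreeGroup.norm] at habs
        have : (toWord w₀).length = 0 := by omega
        rw [FreeGroup.norm] at hw₀n
        omega
    · -- recursive step
      have hmem' : ∀ w ∈ (w₂ :: zws'), w ∈ WS u v :=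
        fun w hw => hmem w (List.mem_cons_of_mem _ hw)
      have hchain' : List.Chain' (fun x y => y ≠ x⁻¹) (w₂ :: zws') :=
        (List.isChain_cons.1 hchain).2
      have hadj : w₂ ≠ w₀⁻¹ := (List.isChain_cons_cons.1 hchain).1
      obtain ⟨t', B', htY, ht'ne, ⟨h', hw₂word, hcert⟩, hnorm2, hB'⟩ :=
        ih hmem' hchain' w₂ zws' rfl
      set X := toWord w₀ with hX
      set Y := toWord ((w₂ :: zws').prod) with hY
      obtain ⟨P, R, Q, h1, h2, hred, hmk⟩ :=
        mul_decomp X Y (reduced_toWord _) (reduced_toWord _)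
      have hprodw : toWord ((w₀ :: w₂ :: zws').prod) = P ++ Q := by
        rw [List.prod_cons]
        have : w₀ * (w₂ :: zws').prod = mk X * mk Y := by
          rw [hX, hY, mk_toWord, mk_toWord]
        rw [this, hmk, hred.toWord_mk]
      have ht'Y : t' <+: Y := ⟨B', htY.symm⟩
      have hRY : R <+: Y := ⟨Q, h2.symm⟩
      by_cases hRt : t'.length ≤ R.length
      · -- contradiction via N2C
        exfalso
        obtain ⟨r₂, hr₂⟩ := List.prefix_of_prefix_length_le ht'Y hRY hRt
        have hXsuf : X = (P ++ invRev r₂) ++ invRev t' := by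
          rw [h1, ← hr₂, invRev_append, List.append_assoc]
        have hhalf : 2 * t'.length ≤ norm w₂ :=
          (hN1 w₀ w₂ hw₀W (hmem' w₂ (List.mem_cons_self)) hadj
            (P ++ invRev r₂) h' t' hXsuf hw₂word).2
        have hexact : 2 * t'.length = norm w₂ := le_antisymm hhalf hnorm2
        obtain ⟨w₃, zws'', hzws', hw₃pre⟩ := hcert hexact
        have hlen' : t'.length = h'.length := by
          have : norm w₂ = t'.length + h'.length := by
            rw [FreeGroup.norm, hw₂word, List.length_append]
          omega
        have hw₃W : w₃ ∈ WS u v := by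
          refine hmem' w₃ ?_
          rw [hzws']
          exact List.mem_cons_of_mem _ (List.mem_cons_self)
        have hadj23 : w₃ ≠ w₂⁻¹ := by
          have hc2 := hchain'
          rw [hzws'] at hc2
          exact (List.isChain_cons_cons.1 hc2).1
        exact hN2 w₀ w₂ w₃ hw₀W (hmem' w₂ (List.mem_cons_self)) hw₃W hadj hadj23
          t' h' hw₂word hlen' ⟨P ++ invRev r₂, hXsuf.symm⟩ hw₃pre
      · push_neg at hRt
        obtain ⟨t₂, ht₂⟩ := List.prefix_of_prefix_length_le hRY ht'Y (le_of_lt hRt)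
        have ht₂ne : t₂ ≠ [] := by
          intro habs
          rw [habs, List.append_nil] at ht₂
          rw [ht₂] at hRt
          omega
        have hQ : Q = t₂ ++ B' := by
          have e : R ++ Q = R ++ (t₂ ++ B') := by
            rw [← h2, htY, ← ht₂, List.append_assoc]
          exact List.append_cancel_left e
        have hw₂R : toWord w₂ = R ++ (t₂ ++ h') := by
          rw [hw₂word, ← ht₂, List.append_assoc]
        have hN1R : 2 * R.length ≤ norm w₀ :=
          (hN1 w₀ w₂ hw₀W (hmem' w₂ (List.mem_cons_self)) hadj
            P (t₂ ++ h') R h1 hw₂R).1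
        have hXlen : norm w₀ = P.length + R.length := by
          rw [FreeGroup.norm, ← hX, h1, List.length_append, invRev_length]
        have hPne : P ≠ [] := by
          intro habs
          rw [habs] at hXlen
          simp at hXlen
          omega
        refine ⟨P, t₂ ++ B', by rw [hprodw, hQ], hPne, ⟨invRev R, h1, ?_⟩, by omega, ?_⟩
        · intro hex
          refine ⟨w₂, zws', rfl, ?_⟩
          rw [invRev_invRev]
          exact List.IsPrefix.trans ⟨t₂, ht₂⟩ ⟨h', hw₂word.symm⟩
        · intro _
          simp [ht₂ne]

theorem prod_norm_ge {u v : FreeGroup α} (hN0 : ∀ w ∈ WS u v, w ≠ 1)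
    (hN1 : N1C u v) (hN2 : N2C u v) (ws : List (FreeGroup α))
    (hmem : ∀ w ∈ ws, w ∈ WS u v) (hchain : List.Chain' (fun x y => y ≠ x⁻¹) ws)
    (hlen : 2 ≤ ws.length) : 2 ≤ norm ws.prod := by
  rcases ws with - | ⟨w₁, rest⟩
  · simp at hlen
  obtain ⟨t, B, hw, htne, -, -, hBne⟩ := prod_struct hN0 hN1 hN2 _ hmem hchain w₁ rest rfl
  have hrne : rest ≠ [] := by
    intro h
    rw [h] at hlen
    simp at hlen
  have hB := hBne hrne
  rw [FreeGroup.norm, hw, List.length_append]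
  have h1 : 1 ≤ t.length := List.length_pos_iff.2 htne
  have h2 : 1 ≤ B.length := List.length_pos_iff.2 hB
  omega

theorem norm_le_one_cases {u v : FreeGroup α} (hN0 : ∀ w ∈ WS u v, w ≠ 1)
    (hN1 : N1C u v) (hN2 : N2C u v) {g : FreeGroup α}
    (hws : ∃ ws : List (FreeGroup α), (∀ w ∈ ws, w ∈ WS u v) ∧
      List.Chain' (fun x y => y ≠ x⁻¹) ws ∧ ws.prod = g)
    (hg : norm g ≤ 1) : g = 1 ∨ g ∈ WS u v := by
  obtain ⟨ws, hmem, hchain, rfl⟩ := hws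
  rcases ws with - | ⟨w₁, rest⟩
  · left; simp
  rcases rest with - | ⟨w₂, rest'⟩
  · right
    simpa using hmem w₁ (List.mem_cons_self)
  · have := prod_norm_ge hN0 hN1 hN2 _ hmem hchain (by simp)
    omega
theorem suffix_eq_of_length {β : Type*} {l₁ l₂ L : List β} (h1 : l₁ <:+ L) (h2 : l₂ <:+ L)
    (h : l₁.length = l₂.length) : l₁ = l₂ := by
  obtain ⟨a, ha⟩ := h1
  obtain ⟨b, hb⟩ := h2
  have hab : b ++ l₂ = a ++ l₁ := hb.trans ha.symm
  have hl : b.length = a.length := by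
    have := congrArg List.length hab
    simp only [List.length_append] at this
    omega
  exact (List.append_inj_right hab hl).symm

theorem prefix_eq_of_length {β : Type*} {l₁ l₂ L : List β} (h1 : l₁ <+: L) (h2 : l₂ <+: L)
    (h : l₁.length = l₂.length) : l₁ = l₂ := by
  obtain ⟨a, ha⟩ := h1
  obtain ⟨b, hb⟩ := h2
  exact List.append_inj_left (ha.trans hb.symm) h

theorem invRev_prefix_of_suffix {A B : List (α × Bool)} (h : A <:+ B) :
    invRev A <+: invRev B := by
  obtain ⟨c, rfl⟩ := h
  rw [invRev_append]
  exact ⟨invRev c, rfl⟩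

theorem invRev_suffix_of_prefix {A B : List (α × Bool)} (h : A <+: B) :
    invRev A <:+ invRev B := by
  obtain ⟨c, rfl⟩ := h
  rw [invRev_append]
  exact ⟨invRev c, rfl⟩

theorem MinPair.toN1C {u v : FreeGroup α} (h : MinPair (u, v)) : N1C u v := by
  intro w z hw hz hzw A B S h1 h2
  by_cases hzw2 : z = w
  · subst hzw2
    exact ⟨square_canc h1 h2, square_canc h1 h2⟩
  · obtain ⟨b1, b2⟩ := h.N1norm w z hw hz hzw hzw2
    exact canc_bound h1 h2 b1 b2

theorem WS_inv_left (u v : FreeGroup α) : WS u⁻¹ v = WS u v := by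
  ext x
  simp only [WS, Set.mem_insert_iff, Set.mem_singleton_iff, inv_inv]
  tauto

theorem WS_swap (u v : FreeGroup α) : WS v u = WS u v := by
  ext x
  simp only [WS, Set.mem_insert_iff, Set.mem_singleton_iff]
  tauto

/-- Classification of the flanking factors in an exact-half configuration. -/
theorem flanks {u v w₁ w₃ : FreeGroup α} {H T : List (α × Bool)}
    (hu : toWord u = H ++ T) (hlen : H.length = T.length) (hne : H ≠ [])
    (hw₁ : w₁ ∈ WS u v) (hw₃ : w₃ ∈ WS u v) (h1 : u ≠ w₁⁻¹) (h3 : w₃ ≠ u⁻¹)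
    (hsuf : invRev H <:+ toWord w₁) (hpre : invRev T <+: toWord w₃) :
    (w₁ = v ∨ w₁ = v⁻¹) ∧ w₃ = w₁ := by
  have key : T = invRev H → False := by
    intro hT
    refine not_reduced_append_invRev hne ?_
    rw [← hT, ← hu]
    exact reduced_toWord u
  have hTu : T <:+ toWord u := ⟨H, hu.symm⟩
  have hHu : H <+: toWord u := ⟨T, hu.symm⟩
  have hw₁v : w₁ = v ∨ w₁ = v⁻¹ := by
    rcases hw₁ with rfl | rfl | rfl | rfl
    · exfalso
      apply key
      refine suffix_eq_of_length hTu ?_ ?_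
      · exact hsuf
      · rw [invRev_length]; omega
    · exact absurd (inv_inv u).symm h1
    · exact Or.inl rfl
    · exact Or.inr rfl
  have hw₃v : w₃ = v ∨ w₃ = v⁻¹ := by
    rcases hw₃ with rfl | rfl | rfl | rfl
    · exfalso
      apply key
      have : invRev T = H := by
        refine prefix_eq_of_length hpre hHu ?_
        rw [invRev_length]; omega
      rw [← this, invRev_invRev]
    · exact absurd rfl h3
    · exact Or.inl rfl
    · exact Or.inr rfl
  have hmix : w₃ = w₁⁻¹ → False := by
    intro hmixed
    apply key
    have hw₃word : toWord w₃ = invRev (toWord w₁) := by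
      rw [hmixed, toWord_inv]
    obtain ⟨Z₀, hZ₀⟩ := hsuf
    have hHpre : H <+: toWord w₃ := by
      rw [hw₃word, ← hZ₀, invRev_append, invRev_invRev]
      exact ⟨invRev Z₀, rfl⟩
    have : invRev T = H := by
      refine prefix_eq_of_length hpre hHpre ?_
      rw [invRev_length]; omega
    rw [← this, invRev_invRev]
  rcases hw₁v with rfl | rfl <;> rcases hw₃v with h' | h'
  · exact ⟨Or.inl rfl, h'⟩
  · exact absurd (by rw [h']) hmix
  · exact absurd (by rw [h', inv_inv]) hmix
  · exact ⟨Or.inr rfl, h'⟩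

/-- Fixing an exact-half violation whose middle element is the first component. -/
theorem fix_at_first {u v : FreeGroup α} (hmin : MinPair (u, v))
    (hN0 : ∀ w ∈ WS u v, w ≠ 1) (hodd : norm v % 2 = 1)
    {w₁ w₃ : FreeGroup α} {H T : List (α × Bool)}
    (hw₁ : w₁ ∈ WS u v) (hw₃ : w₃ ∈ WS u v) (h1 : u ≠ w₁⁻¹) (h3 : w₃ ≠ u⁻¹)
    (hu : toWord u = H ++ T) (hlen : H.length = T.length)
    (hsuf : invRev H <:+ toWord w₁) (hpre : invRev T <+: toWord w₃) :
    ∃ v', Reach (u, v) (u, v') ∧ norm v' = norm v ∧ N2C u v' := by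
  have hu1 : u ≠ 1 := hN0 u (Or.inl rfl)
  have hne : H ≠ [] := by
    intro habs
    apply hu1
    rw [← mk_toWord (x := u), hu, habs]
    have : T = [] := List.length_eq_zero_iff.1 (by rw [← hlen, habs]; rfl)
    rw [this]
    rfl
  obtain ⟨hzv, hww⟩ := flanks hu hlen hne hw₁ hw₃ h1 h3 hsuf hpre
  rw [hww] at hpre
  set z := w₁ with hzdef
  set k := H.length with hk
  have hnormu : norm u = 2 * k := by
    rw [FreeGroup.norm, hu, List.length_append, ← hlen]
    omega
  have hnormz : norm z = norm v := by
    rcases hzv with rfl | rfl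
    · rfl
    · exact norm_inv_eq
  have hzoddn : norm z % 2 = 1 := by rw [hnormz]; exact hodd
  have huz : u ≠ z := by
    intro h
    rw [h] at hnormu
    omega
  have huzinv : u ≠ z⁻¹ := by
    intro h
    have : norm u = norm z := by rw [h, norm_inv_eq]
    omega
  have hzW : z ∈ WS u v := hw₁
  have huW : u ∈ WS u v := Or.inl rfl
  obtain ⟨Z₀, hZ₀⟩ := hsuf
  have h2k : 2 * k ≤ norm z := by
    have := hmin.toN1C z u hzW huW huzinv Z₀ T H hZ₀.symm hu
    exact this.1
  have hZ₀len : Z₀.length = norm z - k := by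
    have : norm z = Z₀.length + k := by
      rw [FreeGroup.norm, ← hZ₀, List.length_append, invRev_length]
    omega
  have hkZ₀ : k < Z₀.length := by omega
  -- the replacement element
  set v' := z * u with hv'
  have hgez : norm z ≤ norm v' :=
    (hmin.N1norm z u hzW huW huzinv huz).1
  have hv'mk : v' = mk (Z₀ ++ T) := by
    have hz' : z = mk Z₀ * (mk H)⁻¹ := by
      rw [inv_mk, mul_mk, hZ₀, mk_toWord]
    have hu' : u = mk H * mk T := by
      rw [mul_mk, ← hu, mk_toWord]
    rw [hv', hz', hu', ← mul_mk]
    group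
  have hv'word : toWord v' = Z₀ ++ T := by
    rw [hv'mk, toWord_mk]
    apply reduce_eq_self_of_length
    have hle : (reduce (Z₀ ++ T)).length ≤ (Z₀ ++ T).length := Red.length_le reduce.red
    have : norm v' = (reduce (Z₀ ++ T)).length := by
      rw [FreeGroup.norm, hv'mk, toWord_mk]
    have hlen2 : (Z₀ ++ T).length = norm z := by
      rw [List.length_append, hZ₀len, ← hlen]
      omega
    omega
  have hnormv' : norm v' = norm z := by
    have : norm v' = (Z₀ ++ T).length := by rw [FreeGroup.norm, hv'word]
    rw [this, List.length_append, hZ₀len, ← hlen]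
    omega
  have hITZ₀ : invRev T <+: Z₀ :=
    List.prefix_of_prefix_length_le hpre ⟨invRev H, hZ₀⟩
      (by rw [invRev_length]; omega)
  obtain ⟨M, hM⟩ := hITZ₀
  have hv'w2 : toWord v' = invRev T ++ (M ++ T) := by
    rw [hv'word, ← hM, List.append_assoc]
  have hv'invw : toWord v'⁻¹ = invRev T ++ (invRev M ++ T) := by
    rw [toWord_inv, hv'word, ← hM, invRev_append, invRev_append, invRev_invRev]
  have hTsufv' : T <:+ toWord v' := ⟨Z₀, hv'word.symm⟩
  have hTsufv'i : T <:+ toWord v'⁻¹ := by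
    rw [hv'invw, ← List.append_assoc]
    exact ⟨invRev T ++ invRev M, rfl⟩
  have hITprev' : invRev T <+: toWord v' := by
    rw [hv'w2]; exact ⟨M ++ T, rfl⟩
  have hITprev'i : invRev T <+: toWord v'⁻¹ := by
    rw [hv'invw]; exact ⟨invRev M ++ T, rfl⟩
  have hkey : T = invRev H → False := by
    intro hT
    refine not_reduced_append_invRev hne ?_
    rw [← hT, ← hu]
    exact reduced_toWord u
  have hv'1 : v' ≠ 1 := by
    intro h
    rw [h] at hnormv'
    rw [FreeGroup.norm_one] at hnormv'
    omega
  -- Reach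
  have hreach : Reach (u, v) (u, v') := by
    rcases hzv with rfl | rfl
    · exact ((Reach.rfl.step (Move.swap u z)).step (Move.mulR z u)).step (Move.swap (z*u) u)
    · have e1 : Reach (u, v) (u, v⁻¹) := Reach.rfl.step (Move.invR u v)
      have e2 := ((e1.step (Move.swap u v⁻¹)).step (Move.mulR v⁻¹ u)).step
        (Move.swap (v⁻¹ * u) u)
      exact e2
  refine ⟨v', hreach, by rw [hnormv', hnormz], ?_⟩
  -- N2C for the new pair
  intro w₁' w₂' w₃' hm1 hm2 hm3 hc1 hc2 h' t' hsplit hlen' hsuf' hpre'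
  have hWnew : ∀ w ∈ WS u v', w ≠ 1 := by
    rintro w (rfl | rfl | rfl | rfl)
    · exact hu1
    · simpa using hu1
    · exact hv'1
    · simpa using hv'1
  have hw₂even : norm w₂' % 2 = 0 := by
    have : norm w₂' = h'.length + t'.length := by
      rw [FreeGroup.norm, hsplit, List.length_append]
    omega
  have hv'odd : norm v' % 2 = 1 := by rw [hnormv']; exact hzoddn
  have hw₂u : w₂' = u ∨ w₂' = u⁻¹ := by
    rcases hm2 with rfl | rfl | rfl | rfl
    · exact Or.inl rfl
    · exact Or.inr rfl
    · omega
    · rw [norm_inv_eq] at hw₂even; omega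
  rcases hw₂u with rfl | rfl
  · -- middle is u
    have hh'H : h' = H ∧ t' = T := by
      have heq := hsplit.symm.trans hu
      have hlh : h'.length = H.length := by
        have := congrArg List.length heq
        simp only [List.length_append] at this
        omega
      exact ⟨List.append_inj_left heq hlh, List.append_inj_right heq hlh⟩
    obtain ⟨e1, e2⟩ := hh'H
    rw [e1] at hsuf'
    rw [e2] at hpre'
    obtain ⟨hflk, -⟩ := flanks (v := v') hu hlen hne hm1 hm3 hc1 hc2 hsuf' hpre'
    have hsufT : T <:+ toWord w₁' := by
      rcases hflk with h'' | h'' <;> rw [h'']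
      · exact hTsufv'
      · exact hTsufv'i
    exact hkey (suffix_eq_of_length hsufT hsuf' (by rw [invRev_length]; omega))
  · -- middle is u⁻¹
    have huinv : toWord u⁻¹ = invRev T ++ invRev H := by
      rw [toWord_inv, hu, invRev_append]
    have hh'H : h' = invRev T ∧ t' = invRev H := by
      have heq := hsplit.symm.trans huinv
      have hlh : h'.length = (invRev T).length := by
        have := congrArg List.length heq
        simp only [List.length_append, invRev_length] at this
        rw [invRev_length]
        omega
      exact ⟨List.append_inj_left heq hlh, List.append_inj_right heq hlh⟩
    obtain ⟨e1, e2⟩ := hh'H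
    rw [e1] at hsuf'
    rw [e2] at hpre'
    have hk1 : 1 ≤ k := List.length_pos_iff.2 hne
    have hne'' : invRev T ≠ [] := by
      intro habs
      have := congrArg List.length habs
      rw [invRev_length] at this
      simp only [List.length_nil] at this
      omega
    have hlen'' : (invRev T).length = (invRev H).length := by
      rw [invRev_length, invRev_length]
      omega
    rw [← WS_inv_left u v'] at hm1 hm3
    obtain ⟨hflk, hww'⟩ := flanks (v := v') huinv hlen'' hne'' hm1 hm3 hc1 hc2 hsuf' hpre'
    rw [hww'] at hpre'
    rw [invRev_invRev] at hpre'
    have hITpre : invRev T <+: toWord w₁' := by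
      rcases hflk with h'' | h'' <;> rw [h'']
      · exact hITprev'
      · exact hITprev'i
    have hHIT : H = invRev T :=
      prefix_eq_of_length hpre' hITpre (by rw [invRev_length]; omega)
    apply hkey
    rw [hHIT, invRev_invRev]

theorem N2C_of_odd {u v : FreeGroup α} (hu : norm u % 2 = 1) (hv : norm v % 2 = 1) :
    N2C u v := by
  intro w₁ w₂ w₃ _ hm2 _ _ _ h t hsplit hlen _ _
  have heven : norm w₂ % 2 = 0 := by
    rw [FreeGroup.norm, hsplit, List.length_append]
    omega
  rcases hm2 with rfl | rfl | rfl | rfl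
  · omega
  · rw [norm_inv_eq] at heven; omega
  · omega
  · rw [norm_inv_eq] at heven; omega

theorem WS_ne_one {u v : FreeGroup α} (hu : u ≠ 1) (hv : v ≠ 1) :
    ∀ w ∈ WS u v, w ≠ 1 := by
  rintro w (rfl | rfl | rfl | rfl)
  · exact hu
  · simpa using hu
  · exact hv
  · simpa using hv

theorem exists_good {u v : FreeGroup α} (hmin : MinPair (u, v))
    (hu1 : u ≠ 1) (hv1 : v ≠ 1)
    (hpar : ¬(norm u % 2 = 0 ∧ norm v % 2 = 0)) :
    ∃ u' v', Reach (u, v) (u', v') ∧ MinPair (u', v') ∧ u' ≠ 1 ∧ v' ≠ 1 ∧ N2C u' v' := by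
  have hN0 := WS_ne_one hu1 hv1
  by_cases hN2 : N2C u v
  · exact ⟨u, v, Reach.rfl, hmin, hu1, hv1, hN2⟩
  unfold N2C at hN2
  push_neg at hN2
  obtain ⟨w₁, w₂, w₃, hm1, hm2, hm3, hc1, hc2, h, t, hsplit, hlen, hsuf, hpre, -⟩ := hN2
  have hw₂even : norm w₂ % 2 = 0 := by
    rw [FreeGroup.norm, hsplit, List.length_append]
    omega
  have hmod : ∀ n : ℕ, n % 2 = 0 ∨ n % 2 = 1 := fun n => by omega
  rcases hm2 with he | he | he | he <;> rw [he] at hw₂even hsplit hc1 hc2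
  · -- middle u
    have hvodd : norm v % 2 = 1 := by
      rcases hmod (norm v) with h' | h'
      · exact absurd ⟨hw₂even, h'⟩ hpar
      · exact h'
    obtain ⟨v', hr, hnorm, hN2'⟩ :=
      fix_at_first hmin hN0 hvodd hm1 hm3 hc1 hc2 hsplit hlen hsuf hpre
    refine ⟨u, v', hr, hmin.of_reach hr (by simp [sum2, hnorm]), hu1, ?_, hN2'⟩
    intro habs
    rw [habs, FreeGroup.norm_one] at hnorm
    exact hv1 (norm_eq_zero.1 hnorm.symm)
  · -- middle u⁻¹
    have hueven : norm u % 2 = 0 := by rwa [norm_inv_eq] at hw₂even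
    have hvodd : norm v % 2 = 1 := by
      rcases hmod (norm v) with h' | h'
      · exact absurd ⟨hueven, h'⟩ hpar
      · exact h'
    have hr0 : Reach (u, v) (u⁻¹, v) := Reach.rfl.step (Move.invL u v)
    have hmin' : MinPair (u⁻¹, v) := hmin.of_reach hr0 (by simp [sum2])
    have hN0' : ∀ w ∈ WS u⁻¹ v, w ≠ 1 := by rw [WS_inv_left]; exact hN0
    rw [← WS_inv_left u v] at hm1 hm3
    obtain ⟨v', hr, hnorm, hN2'⟩ :=
      fix_at_first hmin' hN0' hvodd hm1 hm3 hc1 hc2 hsplit hlen hsuf hpre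
    refine ⟨u⁻¹, v', hr0.trans hr,
      hmin.of_reach (hr0.trans hr) (by simp [sum2, hnorm]), by simpa using hu1, ?_, hN2'⟩
    intro habs
    rw [habs, FreeGroup.norm_one] at hnorm
    exact hv1 (norm_eq_zero.1 hnorm.symm)
  · -- middle v
    have hveven : norm v % 2 = 0 := hw₂even
    have huodd : norm u % 2 = 1 := by
      rcases hmod (norm u) with h' | h'
      · exact absurd ⟨h', hveven⟩ hpar
      · exact h'
    have hr0 : Reach (u, v) (v, u) := Reach.rfl.step (Move.swap u v)
    have hmin' : MinPair (v, u) := hmin.of_reach hr0 (by simp [sum2, add_comm])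
    have hN0' : ∀ w ∈ WS v u, w ≠ 1 := by rw [WS_swap]; exact hN0
    rw [← WS_swap u v] at hm1 hm3
    obtain ⟨u', hr, hnorm, hN2'⟩ :=
      fix_at_first hmin' hN0' huodd hm1 hm3 hc1 hc2 hsplit hlen hsuf hpre
    refine ⟨v, u', hr0.trans hr,
      hmin.of_reach (hr0.trans hr) (by simp [sum2, hnorm]; omega), hv1, ?_, hN2'⟩
    intro habs
    rw [habs, FreeGroup.norm_one] at hnorm
    exact hu1 (norm_eq_zero.1 hnorm.symm)
  · -- middle v⁻¹
    have hveven : norm v % 2 = 0 := by rwa [norm_inv_eq] at hw₂even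
    have huodd : norm u % 2 = 1 := by
      rcases hmod (norm u) with h' | h'
      · exact absurd ⟨h', hveven⟩ hpar
      · exact h'
    have hr0 : Reach (u, v) (v⁻¹, u) :=
      (Reach.rfl.step (Move.swap u v)).step (Move.invL v u)
    have hmin' : MinPair (v⁻¹, u) := hmin.of_reach hr0 (by simp [sum2, add_comm])
    have hN0' : ∀ w ∈ WS v⁻¹ u, w ≠ 1 := by
      rw [WS_inv_left, WS_swap]; exact hN0
    rw [← WS_swap u v, ← WS_inv_left v u] at hm1 hm3
    obtain ⟨u', hr, hnorm, hN2'⟩ :=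
      fix_at_first hmin' hN0' huodd hm1 hm3 hc1 hc2 hsplit hlen hsuf hpre
    refine ⟨v⁻¹, u', hr0.trans hr,
      hmin.of_reach (hr0.trans hr) (by simp [sum2, hnorm]; omega), by simpa using hv1, ?_, hN2'⟩
    intro habs
    rw [habs, FreeGroup.norm_one] at hnorm
    exact hu1 (norm_eq_zero.1 hnorm.symm)


end Min

theorem closure_of_top :
    Subgroup.closure ({FreeGroup.of 0, FreeGroup.of 1} : Set (FreeGroup (Fin 2))) = ⊤ := by
  have hr : Set.range (FreeGroup.of : Fin 2 → FreeGroup (Fin 2)) =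
      {FreeGroup.of 0, FreeGroup.of 1} := by
    ext x
    constructor
    · rintro ⟨i, rfl⟩
      fin_cases i
      · exact Or.inl rfl
      · exact Or.inr rfl
    · rintro (rfl | rfl)
      · exact ⟨0, rfl⟩
      · exact ⟨1, rfl⟩
  rw [← hr, ← FreeGroup.range_lift_eq_closure, FreeGroup.lift_of_eq_id]
  exact MonoidHom.range_eq_top.2 (fun x => ⟨x, rfl⟩)

theorem of01_ne : (FreeGroup.of 0 : FreeGroup (Fin 2)) ≠ FreeGroup.of 1 := by
  intro h
  have := FreeGroup.of_injective h
  simp at this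

theorem of01_ne_inv : (FreeGroup.of 1 : FreeGroup (Fin 2)) ≠ (FreeGroup.of 0)⁻¹ := by
  intro h
  have := congrArg toWord h
  rw [toWord_of, toWord_inv, toWord_of] at this
  simp [FreeGroup.invRev] at this

theorem not_comm_of01 :
    FreeGroup.of (0 : Fin 2) * FreeGroup.of 1 ≠ FreeGroup.of 1 * FreeGroup.of 0 := by
  intro h
  have e1 : FreeGroup.of (0 : Fin 2) * FreeGroup.of 1 =
      mk ([((0 : Fin 2), true)] ++ [((1 : Fin 2), true)]) := by
    rw [← mul_mk]
    rfl
  have e2 : FreeGroup.of (1 : Fin 2) * FreeGroup.of 0 =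
      mk ([((1 : Fin 2), true)] ++ [((0 : Fin 2), true)]) := by
    rw [← mul_mk]
    rfl
  rw [e1, e2] at h
  have := congrArg toWord h
  rw [toWord_mk, toWord_mk] at this
  have r1 : reduce ([((0 : Fin 2), true)] ++ [((1 : Fin 2), true)]) =
      [((0 : Fin 2), true), ((1 : Fin 2), true)] := by decide
  have r2 : reduce ([((1 : Fin 2), true)] ++ [((0 : Fin 2), true)]) =
      [((1 : Fin 2), true), ((0 : Fin 2), true)] := by decide
  rw [r1, r2] at this
  simp at this

theorem nontrivial_components {u v : FreeGroup (Fin 2)}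
    (hc : Subgroup.closure ({u, v} : Set (FreeGroup (Fin 2))) = ⊤) : u ≠ 1 ∧ v ≠ 1 := by
  have key : ∀ w : FreeGroup (Fin 2), Subgroup.closure ({w} : Set (FreeGroup (Fin 2))) = ⊤ →
      False := by
    intro w hw
    have h0 : FreeGroup.of (0 : Fin 2) ∈ Subgroup.zpowers w := by
      rw [Subgroup.zpowers_eq_closure, hw]; trivial
    have h1 : FreeGroup.of (1 : Fin 2) ∈ Subgroup.zpowers w := by
      rw [Subgroup.zpowers_eq_closure, hw]; trivial
    obtain ⟨m, hm⟩ := h0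
    obtain ⟨n, hn⟩ := h1
    apply not_comm_of01
    rw [← hm, ← hn, ← zpow_add, ← zpow_add, add_comm]
  constructor
  · intro h
    subst h
    apply key v
    rw [← hc]
    apply _root_.le_antisymm
    · rw [Subgroup.closure_le]
      intro x hx
      rw [Set.mem_singleton_iff] at hx
      subst hx
      exact Subgroup.subset_closure (Or.inr rfl)
    · rw [Subgroup.closure_le]
      rintro x (rfl | rfl)
      · exact SetLike.mem_coe.2 (Subgroup.one_mem _)
      · exact Subgroup.subset_closure rfl
  · intro h
    subst h
    apply key u
    rw [← hc]
    apply _root_.le_antisymm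
    · rw [Subgroup.closure_le]
      intro x hx
      rw [Set.mem_singleton_iff] at hx
      subst hx
      exact Subgroup.subset_closure (Or.inl rfl)
    · rw [Subgroup.closure_le]
      rintro x (rfl | rfl)
      · exact Subgroup.subset_closure rfl
      · exact SetLike.mem_coe.2 (Subgroup.one_mem _)


end NielsenAux

open NielsenAux FreeGroup List

/-- Every automorphism of `F_2` sends the commutator of the generators to a
conjugate of itself or of its inverse. -/
theorem statement_2 (Φ : MulAut (FreeGroup (Fin 2))) :
    IsConj (Φ commF2) commF2 ∨ IsConj (Φ commF2) commF2⁻¹ := by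
  classical
  set c := commF2 with hc
  set p₀ : FreeGroup (Fin 2) × FreeGroup (Fin 2) := (Φ (FreeGroup.of 0), Φ (FreeGroup.of 1))
    with hp₀
  have hΦc : Φ commF2 = K p₀ := by
    show Φ commF2 = _
    rw [commF2, _root_.map_mul, _root_.map_mul, _root_.map_mul, _root_.map_inv, _root_.map_inv]
    rfl
  -- the base pair generates
  have hctop : Subgroup.closure ({p₀.1, p₀.2} : Set (FreeGroup (Fin 2))) = ⊤ := by
    have him : ({p₀.1, p₀.2} : Set (FreeGroup (Fin 2))) =
        Φ.toMonoidHom '' {FreeGroup.of 0, FreeGroup.of 1} := by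
      rw [Set.image_pair]
      rfl
    rw [him, ← MonoidHom.map_closure, closure_of_top]
    exact Subgroup.map_top_of_surjective _ Φ.surjective
  -- pass to a minimal pair
  obtain ⟨⟨u, v⟩, hreach, hmin⟩ := exists_minPair p₀
  have hctop2 : Subgroup.closure ({u, v} : Set (FreeGroup (Fin 2))) = ⊤ := by
    rw [← reach_closure hreach]
    exact hctop
  obtain ⟨hu1, hv1⟩ := nontrivial_components hctop2
  have hpar : ¬(norm u % 2 = 0 ∧ norm v % 2 = 0) := by
    rintro ⟨h1, h2⟩
    exact not_both_even (0 : Fin 2) hctop2 h1 h2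
  obtain ⟨u', v', hreach2, hmin', hu'1, hv'1, hN2⟩ := exists_good hmin hu1 hv1 hpar
  have hreach3 := Relation.ReflTransGen.trans hreach hreach2
  have hctop3 : Subgroup.closure ({u', v'} : Set (FreeGroup (Fin 2))) = ⊤ := by
    rw [← reach_closure hreach2]
    exact hctop2
  have hN0 := WS_ne_one hu'1 hv'1
  have hN1 := hmin'.toN1C
  -- the generators lie in WS u' v'
  have hx : FreeGroup.of (0 : Fin 2) ∈ WS u' v' := by
    have hmem : FreeGroup.of (0 : Fin 2) ∈ Subgroup.closure ({u', v'} : Set _) := by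
      rw [hctop3]; trivial
    rcases norm_le_one_cases hN0 hN1 hN2 (exists_word hmem) (by rw [norm_of]) with h | h
    · exact absurd h (FreeGroup.of_ne_one 0)
    · exact h
  have hy : FreeGroup.of (1 : Fin 2) ∈ WS u' v' := by
    have hmem : FreeGroup.of (1 : Fin 2) ∈ Subgroup.closure ({u', v'} : Set _) := by
      rw [hctop3]; trivial
    rcases norm_le_one_cases hN0 hN1 hN2 (exists_word hmem) (by rw [norm_of]) with h | h
    · exact absurd h (FreeGroup.of_ne_one 1)
    · exact h
  -- identify the pair and verify the conjugacy property
  have hP : P c (u', v') := by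
    have hxy : (FreeGroup.of (0 : Fin 2)) ≠ FreeGroup.of 1 := of01_ne
    have hxyi : (FreeGroup.of (1 : Fin 2)) ≠ (FreeGroup.of 0)⁻¹ := of01_ne_inv
    have hyxi : (FreeGroup.of (0 : Fin 2)) ≠ (FreeGroup.of 1)⁻¹ := by
      intro h
      apply hxyi
      rw [h, inv_inv]
    rcases hx with h1 | h1 | h1 | h1 <;> rcases hy with h2 | h2 | h2 | h2
    · exact absurd (h1.trans h2.symm) hxy
    · exact absurd (h2.trans (congrArg Inv.inv h1).symm) hxyi
    · rw [← h1, ← h2]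
      left
      refine isConj_iff.2 ⟨(1 : FreeGroup (Fin 2)), ?_⟩
      show (1 : FreeGroup (Fin 2)) * K (FreeGroup.of (0 : Fin 2), FreeGroup.of (1 : Fin 2)) * ((1 : FreeGroup (Fin 2)))⁻¹ = c
      rw [hc]
      simp only [K, commF2]
      group
    · have e2 : v' = (FreeGroup.of (1 : Fin 2))⁻¹ := by rw [h2, inv_inv]
      rw [← h1, e2]
      right
      refine isConj_iff.2 ⟨FreeGroup.of (1 : Fin 2), ?_⟩
      show FreeGroup.of (1 : Fin 2) * K (FreeGroup.of (0 : Fin 2), (FreeGroup.of (1 : Fin 2))⁻¹) * (FreeGroup.of (1 : Fin 2))⁻¹ = c⁻¹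
      rw [hc]
      simp only [K, commF2]
      group
    · exact absurd (h1.trans (congrArg Inv.inv h2).symm) hyxi
    · exact absurd (h1.trans h2.symm) hxy
    · have e1 : u' = (FreeGroup.of (0 : Fin 2))⁻¹ := by rw [h1, inv_inv]
      rw [e1, ← h2]
      right
      refine isConj_iff.2 ⟨FreeGroup.of (0 : Fin 2), ?_⟩
      show FreeGroup.of (0 : Fin 2) * K ((FreeGroup.of (0 : Fin 2))⁻¹, FreeGroup.of (1 : Fin 2)) * (FreeGroup.of (0 : Fin 2))⁻¹ = c⁻¹
      rw [hc]
      simp only [K, commF2]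
      group
    · have e1 : u' = (FreeGroup.of (0 : Fin 2))⁻¹ := by rw [h1, inv_inv]
      have e2 : v' = (FreeGroup.of (1 : Fin 2))⁻¹ := by rw [h2, inv_inv]
      rw [e1, e2]
      left
      refine isConj_iff.2 ⟨(FreeGroup.of (0 : Fin 2) * FreeGroup.of (1 : Fin 2)), ?_⟩
      show (FreeGroup.of (0 : Fin 2) * FreeGroup.of (1 : Fin 2)) * K ((FreeGroup.of (0 : Fin 2))⁻¹, (FreeGroup.of (1 : Fin 2))⁻¹) * ((FreeGroup.of (0 : Fin 2) * FreeGroup.of (1 : Fin 2)))⁻¹ = c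
      rw [hc]
      simp only [K, commF2]
      group
    · rw [← h2, ← h1]
      right
      refine isConj_iff.2 ⟨(1 : FreeGroup (Fin 2)), ?_⟩
      show (1 : FreeGroup (Fin 2)) * K (FreeGroup.of (1 : Fin 2), FreeGroup.of (0 : Fin 2)) * ((1 : FreeGroup (Fin 2)))⁻¹ = c⁻¹
      rw [hc]
      simp only [K, commF2]
      group
    · have e1 : u' = (FreeGroup.of (1 : Fin 2))⁻¹ := by rw [h2, inv_inv]
      rw [e1, ← h1]
      left
      refine isConj_iff.2 ⟨FreeGroup.of (1 : Fin 2), ?_⟩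
      show FreeGroup.of (1 : Fin 2) * K ((FreeGroup.of (1 : Fin 2))⁻¹, FreeGroup.of (0 : Fin 2)) * (FreeGroup.of (1 : Fin 2))⁻¹ = c
      rw [hc]
      simp only [K, commF2]
      group
    · exact absurd (h1.trans h2.symm) hxy
    · exact absurd (h2.trans (congrArg Inv.inv h1).symm) hxyi
    · have e2 : v' = (FreeGroup.of (0 : Fin 2))⁻¹ := by rw [h1, inv_inv]
      rw [← h2, e2]
      left
      refine isConj_iff.2 ⟨FreeGroup.of (0 : Fin 2), ?_⟩
      show FreeGroup.of (0 : Fin 2) * K (FreeGroup.of (1 : Fin 2), (FreeGroup.of (0 : Fin 2))⁻¹) * (FreeGroup.of (0 : Fin 2))⁻¹ = c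
      rw [hc]
      simp only [K, commF2]
      group
    · have e1 : u' = (FreeGroup.of (1 : Fin 2))⁻¹ := by rw [h2, inv_inv]
      have e2 : v' = (FreeGroup.of (0 : Fin 2))⁻¹ := by rw [h1, inv_inv]
      rw [e1, e2]
      right
      refine isConj_iff.2 ⟨(FreeGroup.of (1 : Fin 2) * FreeGroup.of (0 : Fin 2)), ?_⟩
      show (FreeGroup.of (1 : Fin 2) * FreeGroup.of (0 : Fin 2)) * K ((FreeGroup.of (1 : Fin 2))⁻¹, (FreeGroup.of (0 : Fin 2))⁻¹) * ((FreeGroup.of (1 : Fin 2) * FreeGroup.of (0 : Fin 2)))⁻¹ = c⁻¹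
      rw [hc]
      simp only [K, commF2]
      group
    · exact absurd (h1.trans (congrArg Inv.inv h2).symm) hyxi
    · exact absurd (h1.trans h2.symm) hxy
  have := (reach_P (c := c) hreach3).2 hP
  rcases this with h | h
  · left; rwa [hΦc]
  · right; rwa [hΦc]
end

section
/- Bounded cancellation (Cooper): Let N ≥ 1 and let Φ be an automorphism of FreeGroup (Fin N). There exists a constant C ≥ 0 such that for all g, h ∈ FreeGroup (Fin N) with norm(g·h) = norm(g) + norm(h) (i.e., the product g·h is reduced, no cancellation occurs), one has norm(Φ(g·h)) ≥ norm(Φ(g)) + norm(Φ(h)) − 2C. -/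
/-!
The Cayley graph of a free group is a tree, in which the Gromov product of `x` and `y` at `1` is
the length of the common prefix of their reduced words. An automorphism `Φ` and its inverse are
Lipschitz, so `Φ` maps the geodesic from `1` to `g * h` (which passes through `g`) to a
quasi-geodesic. In a tree, a path that wanders distance `D` away from the geodesic between its
endpoints must leave and re-enter the subtree it wanders into through a single gate vertex; the
quasi-geodesic inequality then bounds the time spent in there, hence `D`. So `Φ g` lies within a
bounded distance `C` of the geodesic from `1` to `Φ (g * h)`, i.e. at most `C` letters of `Φ g`
cancel against `Φ h`.
-/

lemma Nat.exists_not_and_succ_of_le {P : ℕ → Prop} {a b : ℕ} (hab : a ≤ b) (ha : ¬P a)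
    (hb : P b) : ∃ i, a ≤ i ∧ i < b ∧ ¬P i ∧ P (i + 1) := by
  induction b, hab using Nat.le_induction with
  | base => exact absurd hb ha
  | succ b hab ih =>
    by_cases hPb : P b
    · obtain ⟨i, hai, hib, hi⟩ := ih hPb
      exact ⟨i, hai, hib.trans (Nat.lt_succ_self b), hi⟩
    · exact ⟨b, hab, Nat.lt_succ_self b, hPb, hb⟩

namespace List

variable {α : Type*} [DecidableEq α]

def commonPrefixLength : List α → List α → ℕ
  | a :: l₁, b :: l₂ => if a = b then commonPrefixLength l₁ l₂ + 1 else 0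
  | _, _ => 0

@[simp] lemma commonPrefixLength_nil_left (l : List α) : commonPrefixLength [] l = 0 := by
  cases l <;> rfl

@[simp] lemma commonPrefixLength_nil_right (l : List α) : commonPrefixLength l [] = 0 := by
  cases l <;> rfl

@[simp] lemma commonPrefixLength_cons_cons (a b : α) (l₁ l₂ : List α) :
    commonPrefixLength (a :: l₁) (b :: l₂) =
      if a = b then commonPrefixLength l₁ l₂ + 1 else 0 := rfl

lemma commonPrefixLength_comm (l₁ l₂ : List α) :
    commonPrefixLength l₁ l₂ = commonPrefixLength l₂ l₁ := by
  induction l₁ generalizing l₂ with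
  | nil => simp
  | cons a l₁ ih => cases l₂ <;> simp [eq_comm, ih]

lemma commonPrefixLength_le_length_left (l₁ l₂ : List α) :
    commonPrefixLength l₁ l₂ ≤ l₁.length := by
  induction l₁ generalizing l₂ with
  | nil => simp
  | cons a l₁ ih =>
    cases l₂ with
    | nil => simp
    | cons b l₂ =>
      simp only [commonPrefixLength_cons_cons, length_cons]
      split_ifs <;> simp [ih]

@[simp] lemma commonPrefixLength_self (l : List α) : commonPrefixLength l l = l.length := by
  induction l <;> simp [*]

lemma min_commonPrefixLength_le (l₁ l₂ l₃ : List α) :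
    min (commonPrefixLength l₁ l₂) (commonPrefixLength l₂ l₃) ≤
      commonPrefixLength l₁ l₃ := by
  induction l₁ generalizing l₂ l₃ with
  | nil => simp
  | cons a l₁ ih =>
    rcases l₂ with _ | ⟨b, l₂⟩
    · simp
    rcases l₃ with _ | ⟨c, l₃⟩
    · simp
    have := ih l₂ l₃
    by_cases hab : a = b <;> by_cases hbc : b = c <;> simp_all

lemma commonPrefixLength_take_right (l₁ l₂ : List α) (k : ℕ) :
    commonPrefixLength l₁ (l₂.take k) = min (commonPrefixLength l₁ l₂) k := by
  induction l₁ generalizing l₂ k with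
  | nil => simp
  | cons a l₁ ih =>
    rcases l₂ with _ | ⟨b, l₂⟩
    · simp
    rcases k with _ | k
    · simp
    by_cases hab : a = b <;> simp [hab, ih]

lemma take_commonPrefixLength (l₁ l₂ : List α) :
    l₁.take (commonPrefixLength l₁ l₂) = l₂.take (commonPrefixLength l₁ l₂) := by
  induction l₁ generalizing l₂ with
  | nil => simp
  | cons a l₁ ih =>
    rcases l₂ with _ | ⟨b, l₂⟩
    · simp
    by_cases hab : a = b <;> simp [hab, ih]

lemma ne_of_mem_head?_drop_commonPrefixLength {l₁ l₂ : List α} {a b : α}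
    (ha : a ∈ (l₁.drop (commonPrefixLength l₁ l₂)).head?)
    (hb : b ∈ (l₂.drop (commonPrefixLength l₁ l₂)).head?) : a ≠ b := by
  induction l₁ generalizing l₂ with
  | nil => simp at ha
  | cons c l₁ ih =>
    rcases l₂ with _ | ⟨d, l₂⟩
    · simp at hb
    by_cases hcd : c = d
    · simp only [commonPrefixLength_cons_cons, hcd, if_true, drop_succ_cons] at ha hb
      exact ih ha hb
    · simp only [commonPrefixLength_cons_cons, hcd, if_false, drop_zero, head?_cons,
        Option.mem_def, Option.some.injEq] at ha hb
      rwa [← ha, ← hb]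

end List

namespace FreeGroup

variable {α : Type*}

lemma getLast?_invRev (w : List (α × Bool)) :
    (invRev w).getLast? = w.head?.map fun a => (a.1, !a.2) := by
  simp [invRev, List.getLast?_reverse, List.head?_map]

variable [DecidableEq α]

lemma IsReduced.invRev {w : List (α × Bool)} (h : IsReduced w) : IsReduced (invRev w) := by
  rw [isReduced_iff_reduce_eq] at h ⊢
  rw [reduce_invRev, h]

lemma norm_mk_of_isReduced {w : List (α × Bool)} (h : IsReduced w) : (mk w).norm = w.length := by
  rw [norm, toWord_mk, h.reduce_eq]

def wordDist (x y : FreeGroup α) : ℕ := (x⁻¹ * y).norm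

lemma wordDist_comm (x y : FreeGroup α) : wordDist x y = wordDist y x := by
  rw [wordDist, wordDist, ← norm_inv_eq, mul_inv_rev, inv_inv]

lemma wordDist_triangle (x y z : FreeGroup α) : wordDist x z ≤ wordDist x y + wordDist y z := by
  simpa [wordDist, mul_assoc] using norm_mul_le (x⁻¹ * y) (y⁻¹ * z)

def gromovProduct (x y : FreeGroup α) : ℕ := x.toWord.commonPrefixLength y.toWord

lemma gromovProduct_comm (x y : FreeGroup α) : gromovProduct x y = gromovProduct y x :=
  List.commonPrefixLength_comm _ _

lemma gromovProduct_le_norm_left (x y : FreeGroup α) : gromovProduct x y ≤ x.norm :=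
  List.commonPrefixLength_le_length_left _ _

@[simp] lemma gromovProduct_self (x : FreeGroup α) : gromovProduct x x = x.norm :=
  List.commonPrefixLength_self _

@[simp] lemma gromovProduct_one_left (x : FreeGroup α) : gromovProduct 1 x = 0 := by
  simp [gromovProduct]

lemma min_gromovProduct_le (x y z : FreeGroup α) :
    min (gromovProduct x y) (gromovProduct y z) ≤ gromovProduct x z :=
  List.min_commonPrefixLength_le _ _ _

/-- Cancelling the common prefix leaves a reduced word. -/
lemma wordDist_add_two_mul_gromovProduct (x y : FreeGroup α) :
    wordDist x y + 2 * gromovProduct x y = x.norm + y.norm := by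
  set k := gromovProduct x y
  set u := x.toWord.drop k
  set v := y.toWord.drop k
  have hx : x = mk (x.toWord.take k) * mk u := by rw [mul_mk, List.take_append_drop, mk_toWord]
  have hy : y = mk (x.toWord.take k) * mk v := by
    rw [show x.toWord.take k = y.toWord.take k from List.take_commonPrefixLength _ _, mul_mk,
      List.take_append_drop, mk_toWord]
  have hred : IsReduced (invRev u ++ v) := by
    have hu : IsReduced u := isReduced_toWord.infix (List.drop_suffix _ _).isInfix
    have hv : IsReduced v := isReduced_toWord.infix (List.drop_suffix _ _).isInfix
    refine List.isChain_append.2 ⟨hu.invRev, hv, ?_⟩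
    intro a ha b hb
    rw [getLast?_invRev] at ha
    obtain ⟨c, hc, rfl⟩ := Option.mem_map.1 ha
    have hcb : c ≠ b := List.ne_of_mem_head?_drop_commonPrefixLength hc hb
    obtain ⟨c₁, c₂⟩ := c
    obtain ⟨b₁, b₂⟩ := b
    rintro rfl
    simp only [ne_eq, Prod.mk.injEq, true_and] at hcb
    cases c₂ <;> cases b₂ <;> simp at hcb ⊢
  have hxy : x⁻¹ * y = mk (invRev u ++ v) := by
    rw [hx, hy, mul_inv_rev, mul_assoc, inv_mul_cancel_left, inv_mk, mul_mk]
  have hkx : k ≤ x.norm := gromovProduct_le_norm_left x y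
  have hky : k ≤ y.norm := (gromovProduct_comm x y).trans_le (gromovProduct_le_norm_left y x)
  rw [wordDist, hxy, norm_mk_of_isReduced hred, List.length_append, invRev_length,
    List.length_drop, List.length_drop]
  simp only [norm] at hkx hky ⊢
  omega

def take (x : FreeGroup α) (k : ℕ) : FreeGroup α := mk (x.toWord.take k)

lemma toWord_take (x : FreeGroup α) (k : ℕ) : (x.take k).toWord = x.toWord.take k := by
  rw [take, toWord_mk, (isReduced_toWord.infix (List.take_prefix _ _).isInfix).reduce_eq]

lemma norm_take (x : FreeGroup α) (k : ℕ) : (x.take k).norm = min k x.norm := by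
  rw [norm, toWord_take, List.length_take, norm]

@[simp] lemma take_zero (x : FreeGroup α) : x.take 0 = 1 := by
  simp [take, ← one_eq_mk]

@[simp] lemma take_norm (x : FreeGroup α) : x.take x.norm = x := by
  rw [take, norm, List.take_length, mk_toWord]

lemma gromovProduct_take_right (x y : FreeGroup α) (k : ℕ) :
    gromovProduct x (y.take k) = min (gromovProduct x y) k := by
  rw [gromovProduct, toWord_take, List.commonPrefixLength_take_right, gromovProduct]

lemma wordDist_take_take (x : FreeGroup α) {s t : ℕ} (hst : s ≤ t) (ht : t ≤ x.norm) :
    wordDist (x.take s) (x.take t) = t - s := by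
  have h := wordDist_add_two_mul_gromovProduct (x.take s) (x.take t)
  rw [gromovProduct_take_right, gromovProduct_comm, gromovProduct_take_right, gromovProduct_self,
    norm_take, norm_take] at h
  omega

lemma take_norm_of_norm_mul {g h : FreeGroup α} (hgh : (g * h).norm = g.norm + h.norm) :
    (g * h).take g.norm = g := by
  have hword : (g * h).toWord = g.toWord ++ h.toWord :=
    (toWord_mul_sublist g h).eq_of_length (by simpa [norm] using hgh)
  rw [take, hword, norm, List.take_left', mk_toWord]
  rfl

/-- Beyond the point `p.take (m + 1)` the tree branches off: a step from outside that subtree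
into it must pass through this point. -/
lemma wordDist_take_le_of_gromovProduct {u v p : FreeGroup α} {m : ℕ}
    (hu : gromovProduct u p ≤ m) (hv : m < gromovProduct v p) :
    wordDist v (p.take (m + 1)) ≤ wordDist u v := by
  have huv : gromovProduct u v ≤ m := by
    have := min_gromovProduct_le u v p
    omega
  have h₁ := wordDist_add_two_mul_gromovProduct v (p.take (m + 1))
  have h₂ := wordDist_add_two_mul_gromovProduct u v
  have h₃ := gromovProduct_le_norm_left u v
  rw [gromovProduct_take_right, norm_take, min_eq_right hv] at h₁
  omega

lemma norm_map_le {β : Type*} [DecidableEq β] (f : FreeGroup α →* FreeGroup β) {L : ℕ}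
    (hL : ∀ a, (f (of a)).norm ≤ L) (x : FreeGroup α) : (f x).norm ≤ L * x.norm := by
  suffices h : ∀ w : List (α × Bool), (f (mk w)).norm ≤ L * w.length by
    have := h x.toWord
    rwa [mk_toWord] at this
  intro w
  induction w with
  | nil => simp [← one_eq_mk]
  | cons a w ih =>
    have ha : (f (mk [a])).norm ≤ L := by
      obtain ⟨a, _ | _⟩ := a
      · rw [show mk [(a, false)] = (of a)⁻¹ from rfl, _root_.map_inv, norm_inv_eq]
        exact hL a
      · exact hL a
    calc (f (mk (a :: w))).norm = (f (mk [a]) * f (mk w)).norm := by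
          rw [← _root_.map_mul, mul_mk]; rfl
      _ ≤ L + L * w.length := (norm_mul_le _ _).trans (add_le_add ha ih)
      _ = L * (a :: w).length := by rw [List.length_cons]; ring

lemma wordDist_map_le {β : Type*} [DecidableEq β] (f : FreeGroup α →* FreeGroup β) {L : ℕ}
    (hL : ∀ a, (f (of a)).norm ≤ L) (x y : FreeGroup α) :
    wordDist (f x) (f y) ≤ L * wordDist x y := by
  simpa [wordDist] using norm_map_le f hL (x⁻¹ * y)

lemma wordDist_le_mul_of_forall_wordDist_succ_le {y : ℕ → FreeGroup α} {L s t : ℕ}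
    (hst : s ≤ t) (hstep : ∀ i, s ≤ i → i < t → wordDist (y i) (y (i + 1)) ≤ L) :
    wordDist (y s) (y t) ≤ L * (t - s) := by
  induction t, hst using Nat.le_induction with
  | base => simp [wordDist]
  | succ t hst ih =>
    calc wordDist (y s) (y (t + 1)) ≤ wordDist (y s) (y t) + wordDist (y t) (y (t + 1)) :=
          wordDist_triangle _ _ _
      _ ≤ L * (t - s) + L :=
          add_le_add (ih fun i hi hit => hstep i hi (by omega)) (hstep t hst (by omega))
      _ = L * (t + 1 - s) := by rw [Nat.sub_add_comm hst, mul_add_one]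

/-- The Morse lemma in the Cayley tree of a free group, with base point `1`. -/
theorem norm_le_gromovProduct_add_of_quasiGeodesic {y : ℕ → FreeGroup α} {n L L' k : ℕ}
    (hy₀ : y 0 = 1) (hstep : ∀ i < n, wordDist (y i) (y (i + 1)) ≤ L)
    (hco : ∀ s t, s ≤ t → t ≤ n → t - s ≤ L' * wordDist (y s) (y t)) (hk : k ≤ n) :
    (y k).norm ≤ gromovProduct (y k) (y n) + (2 * L ^ 2 * L' + L + 1) := by
  set p := y k
  set m := gromovProduct p (y n)
  by_contra! hfar
  have hm : m < p.norm := by omega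
  obtain ⟨i, -, hik, hi_out, hi_in⟩ := Nat.exists_not_and_succ_of_le
    (P := fun t => m < gromovProduct (y t) p) (Nat.zero_le k) (by simp [hy₀])
    (by simpa [p] using hm)
  obtain ⟨j, hkj, hjn, hj_in, hj_out⟩ := Nat.exists_not_and_succ_of_le
    (P := fun t => gromovProduct (y t) p ≤ m) hk (by simpa [p] using hm)
    (by simp [m, gromovProduct_comm])
  simp only [not_lt, not_le] at hi_out hi_in hj_in hj_out
  set q := p.take (m + 1)
  have hiq : wordDist (y (i + 1)) q ≤ L :=
    (wordDist_take_le_of_gromovProduct hi_out hi_in).trans (hstep i (by omega))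
  have hjq : wordDist (y j) q ≤ L := by
    refine (wordDist_take_le_of_gromovProduct hj_out hj_in).trans ?_
    rw [wordDist_comm]
    exact hstep j hjn
  have hij : j - (i + 1) ≤ L' * (2 * L) := calc
    j - (i + 1) ≤ L' * wordDist (y (i + 1)) (y j) := hco _ _ (by omega) hjn.le
    _ ≤ L' * (wordDist (y (i + 1)) q + wordDist q (y j)) := by gcongr; exact wordDist_triangle ..
    _ ≤ L' * (2 * L) := by rw [wordDist_comm q]; gcongr; omega
  have hpq : wordDist p q = p.norm - (m + 1) := by
    have h := wordDist_add_two_mul_gromovProduct p q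
    rw [gromovProduct_take_right, gromovProduct_self, norm_take] at h
    omega
  have hpq_le : p.norm - (m + 1) ≤ 2 * L ^ 2 * L' + L := calc
    p.norm - (m + 1) = wordDist p q := hpq.symm
    _ ≤ wordDist (y (i + 1)) p + wordDist (y (i + 1)) q := by
        rw [wordDist_comm _ p]; exact wordDist_triangle ..
    _ ≤ L * (k - (i + 1)) + L := by
        gcongr
        exact wordDist_le_mul_of_forall_wordDist_succ_le (by omega)
          fun t _ htk => hstep t (by omega)
    _ ≤ L * (L' * (2 * L)) + L := by gcongr; omega
    _ = 2 * L ^ 2 * L' + L := by ring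
  omega

theorem norm_map_take_le_gromovProduct_add {β : Type*} [DecidableEq β]
    (Φ : FreeGroup α ≃* FreeGroup β) {L L' : ℕ} (hL : ∀ a, (Φ (of a)).norm ≤ L)
    (hL' : ∀ b, (Φ.symm (of b)).norm ≤ L') (x : FreeGroup α) {k : ℕ} (hk : k ≤ x.norm) :
    (Φ (x.take k)).norm ≤ gromovProduct (Φ (x.take k)) (Φ x) + (2 * L ^ 2 * L' + L + 1) := by
  have h := norm_le_gromovProduct_add_of_quasiGeodesic (y := fun t => Φ (x.take t))
    (n := x.norm) (L := L) (L' := L') (by simp) ?_ ?_ hk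
  · simpa using h
  · intro i hi
    calc wordDist (Φ (x.take i)) (Φ (x.take (i + 1)))
        ≤ L * wordDist (x.take i) (x.take (i + 1)) := wordDist_map_le Φ.toMonoidHom hL _ _
      _ = L := by simp [wordDist_take_take x (Nat.le_succ i) hi]
  · intro s t hst ht
    calc t - s = wordDist (Φ.symm (Φ (x.take s))) (Φ.symm (Φ (x.take t))) := by
          rw [MulEquiv.symm_apply_apply, MulEquiv.symm_apply_apply, wordDist_take_take x hst ht]
      _ ≤ L' * wordDist (Φ (x.take s)) (Φ (x.take t)) :=
          wordDist_map_le Φ.symm.toMonoidHom hL' _ _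

end FreeGroup

open FreeGroup

theorem statement_6_general (N : ℕ) (Φ : MulAut (FreeGroup (Fin N))) :
    ∃ C : ℤ, 0 ≤ C ∧ ∀ g h : FreeGroup (Fin N),
      (g * h).norm = g.norm + h.norm →
      ((Φ (g * h)).norm : ℤ) ≥ ((Φ g).norm : ℤ) + ((Φ h).norm : ℤ) - 2 * C := by
  obtain ⟨L, hL⟩ := Finite.exists_le fun a => (Φ (of a)).norm
  obtain ⟨L', hL'⟩ := Finite.exists_le fun a => (Φ.symm (of a)).norm
  set C := 2 * L ^ 2 * L' + L + 1
  refine ⟨C, by positivity, fun g h hgh => ?_⟩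
  have hnear := norm_map_take_le_gromovProduct_add Φ hL hL' (g * h) (k := g.norm) (by omega)
  rw [take_norm_of_norm_mul hgh] at hnear
  have hdist := wordDist_add_two_mul_gromovProduct (Φ g) (Φ (g * h))
  rw [wordDist, _root_.map_mul, inv_mul_cancel_left, ← _root_.map_mul] at hdist
  omega

/-- **Bounded cancellation** (Cooper). For every automorphism `Φ` of the free
group `F_N` there is a constant `C ≥ 0` such that whenever the product `g * h` is
reduced (no cancellation, i.e. `‖g h‖ = ‖g‖ + ‖h‖`), at most `2C` letters cancel
in the product `Φ(g) Φ(h)`. -/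
theorem statement_6 (N : ℕ) (hN : 1 ≤ N) (Φ : MulAut (FreeGroup (Fin N))) :
    ∃ C : ℤ, 0 ≤ C ∧ ∀ g h : FreeGroup (Fin N),
      (g * h).norm = g.norm + h.norm →
      ((Φ (g * h)).norm : ℤ) ≥ ((Φ g).norm : ℤ) + ((Φ h).norm : ℤ) - 2 * C :=
  statement_6_general N Φ
end

section
/- Let F be a free group (e.g. F = FreeGroup α) and let A be a nontrivial free factor of F. Then: (i) A is self-normalizing, i.e., if x ∈ F satisfies xAx⁻¹ = A, then x ∈ A; and (ii) consequently, if Φ and Φ' are automorphisms of F representing the same outer automorphism (Φ'(b) = xΦ(b)x⁻¹ for all b ∈ F, for some fixed x ∈ F) and both satisfy Φ(A) = A and Φ'(A) = A, then there exists a ∈ A such that Φ'(b) = aΦ(b)a⁻¹ for all b ∈ A; hence the restriction to A determines a well-defined outer automorphism of A depending only on the outer class of Φ. -/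
/-- `A` is a free factor of `F` if there is a subgroup `B` such that `F` is the
internal free product of `A` and `B`, i.e. the canonical homomorphism from the
coproduct `A ∗ B` to `F` is an isomorphism. -/
def IsFreeFactor {F : Type*} [Group F] (A : Subgroup F) : Prop :=
  ∃ B : Subgroup F, Function.Bijective ⇑(Monoid.Coprod.lift A.subtype B.subtype)

/-- The conjugate subgroup `x A x⁻¹`. -/
def conjSubgroup {F : Type*} [Group F] (x : F) (A : Subgroup F) : Subgroup F :=
  A.map (MulAut.conj x).toMonoidHom

/-! A free factor `A` of `F = A ∗ B` is self-normalizing. Work in the indexed free product with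
reduced words: if `x ∉ A`, write `x = a t` with `a ∈ A` and `t` a nonempty reduced word whose
first letter is not in `A`. For `1 ≠ h ∈ A`, the word `t⁻¹ h t` is then reduced and contains a
letter outside `A`, so `x⁻¹ (a h a⁻¹) x = t⁻¹ h t ∉ A`. For (ii), `Φ' = conj x ∘ Φ` and both
automorphisms preserve `A`, so `x` normalizes `A` and hence lies in `A`. -/

namespace Monoid.CoprodI

variable {ι : Type*} {M : ι → Type*} [∀ i, Monoid (M i)]

theorem Word.fst_eq_of_mem_equiv_of [DecidableEq ι] [∀ i, DecidableEq (M i)]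
    {i j : ι} {g : M i} {m : M j} (h : ⟨j, m⟩ ∈ (Word.equiv (of g)).toList) : j = i := by
  by_contra hji
  exact List.not_mem_nil ((Word.mem_smul_iff_of_ne hji).1 h)

theorem NeWord.fstIdx_toWord {k l : ι} (w : NeWord M k l) : w.toWord.fstIdx = some k := by
  simp [Word.fstIdx, NeWord.toWord]

theorem NeWord.prod_ne_of {k l i j : ι}
    (w : NeWord M k l) {m : M j} (hm : ⟨j, m⟩ ∈ w.toList) (hji : j ≠ i) (g : M i) :
    w.prod ≠ of g := by
  classical
  intro hw
  have hword : w.toWord = Word.equiv (of g) := hw ▸ (Word.equiv.apply_symm_apply w.toWord).symm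
  refine hji (Word.fst_eq_of_mem_equiv_of (g := g) (m := m) ?_)
  rw [← hword]
  exact hm

theorem normalizer_range_of {G : ι → Type*} [∀ i, Group (G i)] (i : ι) [Nontrivial (G i)] :
    Subgroup.normalizer ((of : G i →* CoprodI G).range : Set (CoprodI G)) =
      (of : G i →* CoprodI G).range := by
  classical
  refine le_antisymm (fun x hx => ?_) Subgroup.le_normalizer
  set p := Word.equivPair i (Word.equiv x)
  have hx_eq : x = of p.head * p.tail.prod := by
    rw [← Word.prod_smul, Word.equivPair_head_smul_equivPair_tail]
    exact (Word.equiv.symm_apply_apply x).symm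
  by_cases htail : p.tail = Word.empty
  · rw [hx_eq, htail, Word.prod_empty, mul_one]
    exact ⟨_, rfl⟩
  exfalso
  obtain ⟨k, l, t, ht⟩ := NeWord.of_word p.tail htail
  have hki : k ≠ i := fun hki => p.fstIdx_ne (by rw [← ht, NeWord.fstIdx_toWord, hki])
  obtain ⟨h, hh⟩ := exists_ne (1 : G i)
  let w := (t.inv.append hki (NeWord.singleton h hh)).append hki.symm t
  have hw : w.prod = x⁻¹ * of (p.head * h * p.head⁻¹) * x := by
    rw [NeWord.append_prod, NeWord.append_prod, NeWord.inv_prod, NeWord.prod_singleton,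
      NeWord.prod, ht, hx_eq]
    simp only [map_mul, map_inv]
    group
  obtain ⟨g, hg⟩ := (Subgroup.mem_normalizer_iff''.1 hx _).1 ⟨p.head * h * p.head⁻¹, rfl⟩
  refine w.prod_ne_of (m := t.head) ?_ hki g (hw.trans hg.symm)
  simp [w, List.mem_of_mem_head? (NeWord.toList_head? t)]

end Monoid.CoprodI

namespace Monoid.Coprod

universe u

variable {H K : Type u} [Group H] [Group K]

instance instGroupCond : ∀ b : Bool, Group (cond b H K)
  | true => ‹Group H›
  | false => ‹Group K›

/-- Reduced words are only available for `CoprodI`, so `H ∗ K` is transported to it. -/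
def mulEquivCoprodI : H ∗ K ≃* CoprodI (fun b => cond b H K) :=
  MonoidHom.toMulEquiv (lift (CoprodI.of (M := fun b => cond b H K) (i := true))
      (CoprodI.of (M := fun b => cond b H K) (i := false)))
    (CoprodI.lift fun | true => inl | false => inr)
    (hom_ext (MonoidHom.ext fun _ => by simp) (MonoidHom.ext fun _ => by simp))
    (CoprodI.ext_hom _ _ fun | true => MonoidHom.ext fun _ => by simp
                             | false => MonoidHom.ext fun _ => by simp)

theorem mulEquivCoprodI_comp_inl :
    (mulEquivCoprodI : H ∗ K ≃* _).toMonoidHom.comp inl =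
      CoprodI.of (M := fun b => cond b H K) (i := true) :=
  MonoidHom.ext fun _ => by simp [mulEquivCoprodI]

theorem normalizer_range_inl [Nontrivial H] :
    Subgroup.normalizer ((inl : H →* H ∗ K).range : Set (H ∗ K)) = (inl : H →* H ∗ K).range := by
  apply Subgroup.map_injective (f := (mulEquivCoprodI : H ∗ K ≃* _).toMonoidHom)
    mulEquivCoprodI.injective
  have : Nontrivial (cond true H K) := ‹Nontrivial H›
  rw [Subgroup.map_equiv_normalizer_eq, MonoidHom.map_range, mulEquivCoprodI_comp_inl,
    CoprodI.normalizer_range_of]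

end Monoid.Coprod

open Monoid Subgroup

theorem IsFreeFactor.normalizer_eq {F : Type*} [Group F] {A : Subgroup F} (hA : IsFreeFactor A)
    (hnt : A ≠ ⊥) : normalizer (A : Set F) = A := by
  obtain ⟨B, hbij⟩ := hA
  have : Nontrivial A := (nontrivial_iff_ne_bot A).2 hnt
  have hrange : (Coprod.inl.range).map (Coprod.lift A.subtype B.subtype) = A := by
    rw [MonoidHom.map_range, Coprod.lift_comp_inl, range_subtype]
  rw [← hrange, ← map_normalizer_eq_of_bijective _ hbij, Coprod.normalizer_range_inl]

theorem Subgroup.mem_normalizer_of_map_eq_of_eq_conj {F : Type*} [Group F] {A : Subgroup F}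
    {Φ Φ' : F →* F} {x : F} (hx : ∀ b, Φ' b = x * Φ b * x⁻¹) (hΦ : A.map Φ = A)
    (hΦ' : A.map Φ' = A) : x ∈ normalizer (A : Set F) := by
  have hcomp : (MulAut.conj x).toMonoidHom.comp Φ = Φ' := MonoidHom.ext fun b => (hx b).symm
  rw [mem_normalizer_iff_map_conj_eq]
  calc A.map (MulAut.conj x).toMonoidHom
      = (A.map Φ).map (MulAut.conj x).toMonoidHom := by rw [hΦ]
    _ = A := by rw [map_map, hcomp, hΦ']

/-- A nontrivial free factor `A` of a free group is self-normalizing, and hence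
two automorphisms in the same outer class that both preserve `A` have restrictions
to `A` differing by an inner automorphism of `A`; so the restriction to `A`
determines a well-defined outer automorphism of `A`. -/
theorem statement_9 {α : Type*} (A : Subgroup (FreeGroup α))
    (hff : IsFreeFactor A) (hnt : A ≠ ⊥) :
    (∀ x : FreeGroup α, conjSubgroup x A = A → x ∈ A) ∧
      (∀ Φ Φ' : MulAut (FreeGroup α),
        (∃ x : FreeGroup α, ∀ b : FreeGroup α, Φ' b = x * Φ b * x⁻¹) →
        A.map Φ.toMonoidHom = A → A.map Φ'.toMonoidHom = A →
        ∃ a ∈ A, ∀ b ∈ A, Φ' b = a * Φ b * a⁻¹) := by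
  have hself := hff.normalizer_eq hnt
  refine ⟨fun x hx => hself ▸ mem_normalizer_iff_map_conj_eq.2 hx, ?_⟩
  rintro Φ Φ' ⟨x, hx⟩ hΦ hΦ'
  exact ⟨x, hself ▸ mem_normalizer_of_map_eq_of_eq_conj hx hΦ hΦ', fun b _ => hx b⟩
end
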